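/- arXiv:2605.30101 — 7 statements merged into one kernel-verified Lean document; each statement's English description precedes it below -/
import Mathlib

section
/- Let x ≥ 2 components be partitioned so that exactly one component has size greater than w/2, and let the remaining r = x − 1 components (all of size ≤ w/2) have total size s ≤ w/2. Then ∑ over the small components of log(w/|C|) ≥ r·log(2r) ≥ (x/2)·log x. -/
/-!
Removing the large component leaves `r = x - 1` small ones of total size `s ≤ w/2`. By concavity
of `log` (AM–GM), `∑ log |C| ≤ r log (s/r)`, so `∑ log (w/|C|) ≥ r log (rw/s) ≥ r log (2r)`;
the last bound `r log (2r) ≥ (x/2) log x` only uses `r ≥ x/2` and `2r ≥ x`.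
-/

open Finset Real

theorem sum_log_le_card_mul_log_mean {ι : Type*} {s : Finset ι} (hs : s.Nonempty)
    {f : ι → ℝ} (hf : ∀ i ∈ s, 0 < f i) :
    ∑ i ∈ s, log (f i) ≤ #s * log ((∑ i ∈ s, f i) / #s) := by
  have hn : (0 : ℝ) < #s := by exact_mod_cast hs.card_pos
  have hweights : ∑ _i ∈ s, (#s : ℝ)⁻¹ = 1 := by
    rw [sum_const, nsmul_eq_mul, mul_inv_cancel₀ hn.ne']
  have hjensen := strictConcaveOn_log_Ioi.concaveOn.le_map_sum
    (fun _ _ => inv_nonneg.2 hn.le) hweights hf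
  simp only [smul_eq_mul, ← mul_sum] at hjensen
  rw [div_eq_inv_mul]
  calc ∑ i ∈ s, log (f i) = #s * ((#s : ℝ)⁻¹ * ∑ i ∈ s, log (f i)) := by field_simp
    _ ≤ _ := mul_le_mul_of_nonneg_left hjensen hn.le

theorem card_mul_log_le_sum_log_div {ι : Type*} {s : Finset ι} (hs : s.Nonempty)
    {f : ι → ℝ} (hf : ∀ i ∈ s, 0 < f i) {w : ℝ} (hw : 0 < w) :
    #s * log (#s * w / ∑ i ∈ s, f i) ≤ ∑ i ∈ s, log (w / f i) := by
  have hn : (0 : ℝ) < #s := by exact_mod_cast hs.card_pos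
  have hsum : 0 < ∑ i ∈ s, f i := sum_pos hf hs
  have hsplit : ∑ i ∈ s, log (w / f i) = #s * log w - ∑ i ∈ s, log (f i) := by
    rw [sum_congr rfl fun i hi => log_div hw.ne' (hf i hi).ne', sum_sub_distrib, sum_const,
      nsmul_eq_mul]
  have hmean : log (#s * w / ∑ i ∈ s, f i) = log w - log ((∑ i ∈ s, f i) / #s) := by
    rw [← log_div hw.ne' (by positivity)]
    congr 1
    field_simp
  rw [hsplit, hmean, mul_sub]
  linarith [sum_log_le_card_mul_log_mean hs hf]

theorem half_mul_log_le_pred_mul_log_two_mul_pred {x : ℝ} (hx : 2 ≤ x) :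
    x / 2 * log x ≤ (x - 1) * log (2 * (x - 1)) := by
  have hlog : log x ≤ log (2 * (x - 1)) := log_le_log (by linarith) (by linarith)
  have hlog_nonneg : 0 ≤ log x := log_nonneg (by linarith)
  nlinarith

theorem stmt_2_general (x w : ℕ) (hx : 2 ≤ x) (c : Fin x → ℕ) (hpos : ∀ i, 1 ≤ c i)
    (i₀ : Fin x)
    (hstot : (∑ i ∈ Finset.univ.erase i₀, (c i : ℝ)) ≤ (w : ℝ) / 2) :
    ((x : ℝ) - 1) * Real.log (2 * ((x : ℝ) - 1)) ≤
        ∑ i ∈ Finset.univ.erase i₀, Real.log ((w : ℝ) / (c i : ℝ)) ∧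
    ((x : ℝ) / 2) * Real.log x ≤ ((x : ℝ) - 1) * Real.log (2 * ((x : ℝ) - 1)) := by
  set small := univ.erase i₀
  have hxR : (2 : ℝ) ≤ x := by exact_mod_cast hx
  have hcard : (#small : ℝ) = x - 1 := by
    rw [card_erase_of_mem (mem_univ _), card_univ, Fintype.card_fin, Nat.cast_pred (by omega)]
  have hsmall : small.Nonempty := card_pos.1 (by rw [← Nat.cast_pos (α := ℝ), hcard]; linarith)
  have hcpos : ∀ i ∈ small, (0 : ℝ) < c i := fun i _ => by exact_mod_cast hpos i
  have hspos : 0 < ∑ i ∈ small, (c i : ℝ) := sum_pos hcpos hsmall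
  have hw : (0 : ℝ) < w := by linarith
  refine ⟨?_, half_mul_log_le_pred_mul_log_two_mul_pred hxR⟩
  calc ((x : ℝ) - 1) * log (2 * ((x : ℝ) - 1))
      ≤ #small * log (#small * w / ∑ i ∈ small, (c i : ℝ)) := by
        rw [hcard]
        gcongr
        · linarith
        · linarith
        rw [le_div_iff₀ hspos]
        nlinarith
    _ ≤ _ := card_mul_log_le_sum_log_div hsmall hcpos hw

/-- With `x ≥ 2` components of total size `w`, exactly one of size `> w/2`, the remaining
`r = x - 1` small components (total size `s ≤ w/2`) satisfy
`∑_{small C} log (w/|C|) ≥ r log (2r) ≥ (x/2) log x`. -/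
theorem stmt_2 (x w : ℕ) (hx : 2 ≤ x) (c : Fin x → ℕ) (hpos : ∀ i, 1 ≤ c i)
    (hsum : ∑ i, c i = w) (i₀ : Fin x)
    (hbig : (w : ℝ) / 2 < (c i₀ : ℝ))
    (hsmall : ∀ i, i ≠ i₀ → (c i : ℝ) ≤ (w : ℝ) / 2)
    (hstot : (∑ i ∈ Finset.univ.erase i₀, (c i : ℝ)) ≤ (w : ℝ) / 2) :
    ((x : ℝ) - 1) * Real.log (2 * ((x : ℝ) - 1)) ≤
        ∑ i ∈ Finset.univ.erase i₀, Real.log ((w : ℝ) / (c i : ℝ)) ∧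
    ((x : ℝ) / 2) * Real.log x ≤ ((x : ℝ) - 1) * Real.log (2 * ((x : ℝ) - 1)) :=
  stmt_2_general x w hx c hpos i₀ hstot
end

section
/- Let G be a finite edge-colored multigraph in which each color class has at least β·|V(G)| edges, so that the total number of edges e(V(G)) is at least β·m·|V(G)| where m is the number of colors. Let W maximize ρ(U) = e(U)/(|U|·log|U|) over all vertex subsets U with |U| ≥ 2, and set ρ = ρ(W), w = |W|. Then for every nonempty A ⊆ W with |A| ≤ w/2 and D = W∖A, the number of edges of G[W] crossing the cut (A, D) is at least ρ·|A|·log(w/|A|). -/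
/-- Maximal-density subgraph expansion: in a finite loopless edge-colored multigraph
whose color classes all have at least `β |V|` edges, if `W` (with `|W| ≥ 2`) maximizes
`ρ(U) = e(U) / (|U| log |U|)` over all `U` with `|U| ≥ 2`, then for every nonempty
`A ⊆ W` with `|A| ≤ |W|/2` the number of edges of `G[W]` crossing the cut `(A, W ∖ A)`
is at least `ρ |A| log (|W|/|A|)`, where `ρ = ρ(W)`.  Here `e(U)` counts, with
multiplicity, the edges with both endpoints in `U`. -/
theorem stmt_7 {V : Type*} [Fintype V] {E : Type*} [Fintype E] [DecidableEq V]
    (m : ℕ) (ends : E → V × V) (color : E → Fin m)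
    (hloop : ∀ e, (ends e).1 ≠ (ends e).2)
    (β : ℝ) (hβ : 0 < β)
    (hclass : ∀ c : Fin m, β * (Fintype.card V : ℝ) ≤ (Nat.card {e : E // color e = c} : ℝ))
    (W : Finset V) (hW : 2 ≤ W.card)
    (hmax : ∀ U : Finset V, 2 ≤ U.card →
      (Nat.card {e : E // (ends e).1 ∈ U ∧ (ends e).2 ∈ U} : ℝ) /
          ((U.card : ℝ) * Real.log (U.card : ℝ)) ≤
        (Nat.card {e : E // (ends e).1 ∈ W ∧ (ends e).2 ∈ W} : ℝ) /
          ((W.card : ℝ) * Real.log (W.card : ℝ))) :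
    ∀ A : Finset V, A ⊆ W → A.Nonempty → (A.card : ℝ) ≤ (W.card : ℝ) / 2 →
      ((Nat.card {e : E // (ends e).1 ∈ W ∧ (ends e).2 ∈ W} : ℝ) /
            ((W.card : ℝ) * Real.log (W.card : ℝ))) *
          (A.card : ℝ) * Real.log ((W.card : ℝ) / (A.card : ℝ)) ≤
        (Nat.card {e : E // ((ends e).1 ∈ A ∧ (ends e).2 ∈ W \ A) ∨
            ((ends e).1 ∈ W \ A ∧ (ends e).2 ∈ A)} : ℝ) := by
  classical
  intro A hAW hAne hAhalf
  set w : ℝ := (W.card : ℝ) with hw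
  set a : ℝ := (A.card : ℝ) with ha
  have hw2 : (2 : ℝ) ≤ w := by rw [hw]; exact_mod_cast hW
  have ha1 : (1 : ℝ) ≤ a := by rw [ha]; exact_mod_cast hAne.card_pos
  have hwlogpos : 0 < w * Real.log w := by
    apply mul_pos (by linarith)
    exact Real.log_pos (by linarith)
  set ρ : ℝ := (Nat.card {e : E // (ends e).1 ∈ W ∧ (ends e).2 ∈ W} : ℝ) /
      (w * Real.log w) with hρdef
  have hρ : 0 ≤ ρ := div_nonneg (Nat.cast_nonneg _) hwlogpos.le
  set D : Finset V := W \ A with hD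
  have hAcard : A.card ≤ W.card := Finset.card_le_card hAW
  have hd : (D.card : ℝ) = w - a := by
    rw [hD, Finset.card_sdiff_of_subset hAW]
    push_cast [hAcard]
    ring
  have hd1 : (1 : ℝ) ≤ (D.card : ℝ) := by rw [hd]; linarith
  -- general bound e(U) ≤ ρ * (|U| log |U|) for nonempty U
  have hbd : ∀ U : Finset V, 1 ≤ U.card →
      (Nat.card {e : E // (ends e).1 ∈ U ∧ (ends e).2 ∈ U} : ℝ) ≤
        ρ * ((U.card : ℝ) * Real.log (U.card : ℝ)) := by
    intro U hU
    rcases eq_or_lt_of_le hU with h1 | h2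
    · -- |U| = 1 : no edges, and RHS = 0
      obtain ⟨v, hv⟩ := Finset.card_eq_one.mp h1.symm
      have hempty : IsEmpty {e : E // (ends e).1 ∈ U ∧ (ends e).2 ∈ U} := by
        refine ⟨fun x => ?_⟩
        obtain ⟨e, h1', h2'⟩ := x
        rw [hv, Finset.mem_singleton] at h1' h2'
        exact hloop e (h1'.trans h2'.symm)
      rw [Nat.card_of_isEmpty, ← h1]
      simp
    · have h2' : 2 ≤ U.card := h2
      have hUpos : 0 < (U.card : ℝ) * Real.log (U.card : ℝ) := by
        apply mul_pos (by exact_mod_cast Nat.lt_of_lt_of_le Nat.zero_lt_two h2')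
        exact Real.log_pos (by exact_mod_cast Nat.lt_of_lt_of_le Nat.one_lt_two h2')
      have := hmax U h2'
      calc (Nat.card {e : E // (ends e).1 ∈ U ∧ (ends e).2 ∈ U} : ℝ)
          = (Nat.card {e : E // (ends e).1 ∈ U ∧ (ends e).2 ∈ U} : ℝ) /
              ((U.card : ℝ) * Real.log (U.card : ℝ)) *
              ((U.card : ℝ) * Real.log (U.card : ℝ)) := by
            exact (div_mul_cancel₀ _ hUpos.ne').symm
        _ ≤ ρ * ((U.card : ℝ) * Real.log (U.card : ℝ)) :=
            mul_le_mul_of_nonneg_right this hUpos.le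
  have hAbd := hbd A hAne.card_pos
  have hDbd := hbd D (by exact_mod_cast hd1)
  -- counting: e(W) ≤ e(A) + e(D) + cut
  have hcount : (Nat.card {e : E // (ends e).1 ∈ W ∧ (ends e).2 ∈ W} : ℝ) ≤
      (Nat.card {e : E // (ends e).1 ∈ A ∧ (ends e).2 ∈ A} : ℝ) +
      (Nat.card {e : E // (ends e).1 ∈ D ∧ (ends e).2 ∈ D} : ℝ) +
      (Nat.card {e : E // ((ends e).1 ∈ A ∧ (ends e).2 ∈ W \ A) ∨
          ((ends e).1 ∈ W \ A ∧ (ends e).2 ∈ A)} : ℝ) := by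
    have : Nat.card {e : E // (ends e).1 ∈ W ∧ (ends e).2 ∈ W} ≤
        Nat.card {e : E // (ends e).1 ∈ A ∧ (ends e).2 ∈ A} +
        Nat.card {e : E // (ends e).1 ∈ D ∧ (ends e).2 ∈ D} +
        Nat.card {e : E // ((ends e).1 ∈ A ∧ (ends e).2 ∈ W \ A) ∨
            ((ends e).1 ∈ W \ A ∧ (ends e).2 ∈ A)} := by
      simp only [Nat.card_eq_fintype_card, Fintype.card_subtype]
      refine le_trans (Finset.card_le_card (show
          (Finset.univ.filter fun e => (ends e).1 ∈ W ∧ (ends e).2 ∈ W) ⊆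
          ((Finset.univ.filter fun e => (ends e).1 ∈ A ∧ (ends e).2 ∈ A) ∪
           (Finset.univ.filter fun e => (ends e).1 ∈ D ∧ (ends e).2 ∈ D)) ∪
          (Finset.univ.filter fun e => ((ends e).1 ∈ A ∧ (ends e).2 ∈ W \ A) ∨
            ((ends e).1 ∈ W \ A ∧ (ends e).2 ∈ A)) from ?_)) ?_
      · intro e he
        simp only [Finset.mem_filter, Finset.mem_univ, true_and, Finset.mem_union,
          hD, Finset.mem_sdiff] at he ⊢
        obtain ⟨h1, h2⟩ := he
        by_cases hA1 : (ends e).1 ∈ A <;> by_cases hA2 : (ends e).2 ∈ A <;> tauto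
      · exact le_trans (Finset.card_union_le _ _)
          (by gcongr; exact Finset.card_union_le _ _)
    exact_mod_cast this
  -- key real inequality
  have hlogle : Real.log (w - a) ≤ Real.log w :=
    Real.log_le_log (by linarith) (by linarith)
  have key : a * Real.log (w / a) ≤
      w * Real.log w - a * Real.log a - (w - a) * Real.log (w - a) := by
    rw [Real.log_div (by linarith) (by linarith)]
    nlinarith [mul_nonneg (by linarith : (0:ℝ) ≤ w - a) (sub_nonneg.mpr hlogle)]
  have h1 := mul_le_mul_of_nonneg_left key hρ
  rw [mul_sub, mul_sub] at h1
  have h2 : ρ * (w * Real.log w) =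
      (Nat.card {e : E // (ends e).1 ∈ W ∧ (ends e).2 ∈ W} : ℝ) := by
    rw [hρdef]; exact div_mul_cancel₀ _ hwlogpos.ne'
  rw [hd] at hDbd
  have goal' : ρ * (a * Real.log (w / a)) ≤
      (Nat.card {e : E // ((ends e).1 ∈ A ∧ (ends e).2 ∈ W \ A) ∨
          ((ends e).1 ∈ W \ A ∧ (ends e).2 ∈ A)} : ℝ) := by
    linarith
  calc ρ * a * Real.log (w / a) = ρ * (a * Real.log (w / a)) := by ring
    _ ≤ _ := goal'
end

section
/- Let F be a field, w ≥ 2, d ≥ 1, and let G be an edge-colored multigraph on [w] with colors in [m] containing d spanning trees T₁, …, T_d with pairwise disjoint color sets. For each color i introduce formal variables a_{i,1}, …, a_{i,d}. Orient the edges of T₁ ∪ ⋯ ∪ T_d arbitrarily (with multiplicity) and let R be the d(w−1) × d(w−1) matrix with rows indexed by these oriented edges e = (u,v), columns indexed by (s,j) ∈ [w−1]×[d], and entries R_{e,(s,j)} = (1_{s=u} − 1_{s=v})·a_{χ(e),j}, where χ(e) is the color of e. Then det R is a nonzero polynomial in the variables a_{i,j}. -/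
/-- A list of `n` oriented edges on the vertex set `Fin (n+1)` forming a spanning tree. -/
def IsSpanningTreeList (n : ℕ) (edges : Fin n → Fin (n + 1) × Fin (n + 1)) : Prop :=
  (∀ e, (edges e).1 ≠ (edges e).2) ∧
  (SimpleGraph.fromRel (fun v u : Fin (n + 1) => ∃ e, edges e = (v, u))).Connected

/-- The edge-equation matrix of `d` colored oriented spanning trees on `Fin (n+1)` with
colors in `Fin m`, specialized at coefficients `α : Fin m → Fin d → R`.  Rows are
indexed by pairs (tree `r`, edge `e`); columns by pairs `(j, s)` with `j ∈ Fin d` a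
coordinate and `s ∈ Fin n` a non-deleted vertex; the entry is
`(1_{s = u} - 1_{s = v}) * α_{χ(e), j}` where `(u, v)` are the endpoints of edge `e` of
tree `r` and `χ(e)` is its color. -/
def certMatrix (R : Type*) [CommRing R] (m d n : ℕ)
    (edges : Fin d → Fin n → Fin (n + 1) × Fin (n + 1))
    (col : Fin d → Fin n → Fin m) (α : Fin m → Fin d → R) :
    Matrix (Fin d × Fin n) (Fin d × Fin n) R :=
  Matrix.of fun re js =>
    ((if (edges re.1 re.2).1 = Fin.castSucc js.2 then (1 : R) else 0) -
        (if (edges re.1 re.2).2 = Fin.castSucc js.2 then (1 : R) else 0)) *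
      α (col re.1 re.2) js.1


lemma sum_ind {F : Type*} [Field F] {n : ℕ} (u : Fin (n+1)) (v : Fin n → F) :
    ∑ s, (if u = Fin.castSucc s then (1:F) else 0) * v s = (Fin.snoc v 0 : Fin (n+1) → F) u := by
  induction u using Fin.lastCases with
  | last =>
      rw [Fin.snoc_last]
      refine Finset.sum_eq_zero fun s _ => ?_
      rw [if_neg (Fin.castSucc_lt_last s).ne', zero_mul]
  | cast t =>
      rw [Fin.snoc_castSucc]
      rw [Finset.sum_eq_single t]
      · simp
      · intro s _ hs
        rw [if_neg (by simpa [Fin.castSucc_inj] using (Ne.symm hs)), zero_mul]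
      · simp

lemma tree_det_ne_zero {F : Type*} [Field F] {n : ℕ}
    (edges : Fin n → Fin (n + 1) × Fin (n + 1))
    (h : IsSpanningTreeList n edges) :
    (Matrix.of fun (e s : Fin n) =>
      ((if (edges e).1 = Fin.castSucc s then (1:F) else 0) -
        (if (edges e).2 = Fin.castSucc s then (1:F) else 0))).det ≠ 0 := by
  intro hdet
  obtain ⟨v, hv, hmul⟩ := (Matrix.exists_mulVec_eq_zero_iff).2 hdet
  set x : Fin (n+1) → F := Fin.snoc v 0 with hx
  have hedge : ∀ e, x (edges e).1 = x (edges e).2 := by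
    intro e
    have := congrFun hmul e
    simp only [Matrix.mulVec, dotProduct, Matrix.of_apply, Pi.zero_apply] at this
    have h2 : ∑ s, ((if (edges e).1 = Fin.castSucc s then (1:F) else 0) -
        (if (edges e).2 = Fin.castSucc s then (1:F) else 0)) * v s
        = x (edges e).1 - x (edges e).2 := by
      simp only [sub_mul, Finset.sum_sub_distrib, sum_ind]
      rfl
    rw [h2] at this
    exact sub_eq_zero.mp this
  have hadj : ∀ a b : Fin (n+1),
      (SimpleGraph.fromRel (fun p q => ∃ e, edges e = (p, q))).Adj a b → x a = x b := by
    intro a b hab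
    rw [SimpleGraph.fromRel_adj] at hab
    rcases hab.2 with ⟨e, he⟩ | ⟨e, he⟩
    · have := hedge e; rw [he] at this; exact this
    · have := hedge e; rw [he] at this; exact this.symm
  have hwalk : ∀ a b : Fin (n+1),
      (SimpleGraph.fromRel (fun p q => ∃ e, edges e = (p, q))).Walk a b → x a = x b := by
    intro a b p
    induction p with
    | nil => rfl
    | cons hadj' _ ih => exact (hadj _ _ hadj').trans ih
  have hzero : ∀ a, x a = 0 := by
    intro a
    obtain ⟨p⟩ := (h.2.preconnected a (Fin.last n))
    rw [hwalk _ _ p]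
    simp [hx]
  apply hv
  funext s
  have := hzero (Fin.castSucc s)
  simpa [hx] using this


/-- Disjoint trees give a nonzero determinant: for `d` spanning trees on `[w]`
(`w = n + 1 ≥ 2`) with pairwise disjoint color sets, the determinant of the
edge-equation matrix, with the coefficients `a_{i,j}` taken as formal variables, is a
nonzero polynomial. -/
theorem stmt_10 (F : Type*) [Field F] (m d n : ℕ) (hd : 1 ≤ d) (hn : 1 ≤ n)
    (edges : Fin d → Fin n → Fin (n + 1) × Fin (n + 1))
    (col : Fin d → Fin n → Fin m)
    (htree : ∀ r, IsSpanningTreeList n (edges r))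
    (hdisj : Pairwise fun r r' : Fin d =>
      Disjoint (Finset.univ.image (col r)) (Finset.univ.image (col r'))) :
    (certMatrix (MvPolynomial (Fin m × Fin d) F) m d n edges col
      (fun i j => MvPolynomial.X (i, j))).det ≠ 0 := by
  intro h
  set σ : Fin m × Fin d → F := fun p => if p.1 ∈ Finset.univ.image (col p.2) then 1 else 0
    with hσ
  set B : Fin d → Matrix (Fin n) (Fin n) F := fun r => Matrix.of fun e s =>
      ((if (edges r e).1 = Fin.castSucc s then (1:F) else 0) -
        (if (edges r e).2 = Fin.castSucc s then (1:F) else 0)) with hB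
  have hmap : (certMatrix (MvPolynomial (Fin m × Fin d) F) m d n edges col
        (fun i j => MvPolynomial.X (i, j))).map (MvPolynomial.eval σ)
      = (Matrix.blockDiagonal B).reindex (Equiv.prodComm (Fin n) (Fin d))
          (Equiv.prodComm (Fin n) (Fin d)) := by
    ext ⟨r, e⟩ ⟨j, s⟩
    simp only [Matrix.map_apply, certMatrix, Matrix.of_apply, Matrix.reindex_apply,
      Matrix.submatrix_apply, Equiv.prodComm_symm, Equiv.prodComm_apply, Prod.swap_prod_mk,
      Matrix.blockDiagonal_apply, map_mul, map_sub, MvPolynomial.eval_X]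
    by_cases hjr : r = j
    · subst hjr
      have : σ (col r e, r) = 1 := by
        rw [hσ]
        simp only [if_pos (Finset.mem_image_of_mem (col r) (Finset.mem_univ e))]
      rw [this, if_pos rfl]
      simp [hB, apply_ite (MvPolynomial.eval σ)]
    · have : σ (col r e, j) = 0 := by
        rw [hσ]
        exact if_neg (Finset.disjoint_left.1 (hdisj hjr)
          (Finset.mem_image_of_mem (col r) (Finset.mem_univ e)))
      rw [this, mul_zero, if_neg hjr]
  have heval : (MvPolynomial.eval σ : MvPolynomial (Fin m × Fin d) F →+* F)
      ((certMatrix (MvPolynomial (Fin m × Fin d) F) m d n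
        edges col (fun i j => MvPolynomial.X (i, j))).det) = 0 := by
    rw [h, map_zero]
  rw [RingHom.map_det, RingHom.mapMatrix_apply, hmap, Matrix.det_reindex_self, Matrix.det_blockDiagonal] at heval
  have : ∀ r : Fin d, (B r).det ≠ 0 := fun r => tree_det_ne_zero (edges r) (htree r)
  exact Finset.prod_ne_zero_iff.2 (fun r _ => this r) heval
end

section
/- Let B ≥ 2, m ≥ 1, d ≥ 1, and let p be a prime. Choose coefficients a_{i,j} ∈ 𝔽_p for i ∈ [m], j ∈ [d], independently and uniformly at random, defining linear forms λ_i(z) = ∑_j a_{i,j} z_j. Then with probability at least 1 − d·B²·(B²m)^{dB}/p, the forms λ₁, …, λ_m are good up to B, i.e., for every tree certificate 𝒯 = (w, T₁, …, T_d) with 2 ≤ w ≤ B, colors in [m], and pairwise disjoint tree color sets, the associated determinant polynomial P_𝒯 does not vanish at the chosen coefficients. -/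
open MvPolynomial Finset

section Aux

lemma eval_ne_zero_of_ne_zero' {F : Type*} [Field F] (f : MvPolynomial (Fin 0) F) (hf : f ≠ 0)
    (a : Fin 0 → F) : eval a f ≠ 0 := by
  intro h
  apply hf
  apply (isEmptyAlgEquiv F (Fin 0)).injective
  rw [map_zero]
  have h1 : ((isEmptyAlgEquiv F (Fin 0)) f : F) = aeval a f := by
    exact congrArg (fun φ : MvPolynomial (Fin 0) F →ₐ[F] F => φ f)
      (MvPolynomial.algHom_ext (f := (isEmptyAlgEquiv F (Fin 0) : MvPolynomial (Fin 0) F →ₐ[F] F)) fun i => i.elim0)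
  rw [h1]
  rw [show ((aeval a) f : F) = eval a f from RingHom.congr_fun (coe_aeval_eq_eval (f := a)) f]
  exact h

lemma poly_root_card' {F : Type*} [Field F] [Fintype F] [DecidableEq F]
    (q : Polynomial F) (hq : q ≠ 0) :
    (Finset.univ.filter fun x : F => q.eval x = 0).card ≤ q.natDegree := by
  refine le_trans (le_trans (Finset.card_le_card ?_) q.roots.toFinset_card_le)
    (Polynomial.card_roots' q)
  intro x hx
  simp only [Finset.mem_filter, Finset.mem_univ, true_and] at hx
  simp [Multiset.mem_toFinset, Polynomial.mem_roots', hq, Polynomial.IsRoot, hx]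

/-- Schwartz–Zippel, weak form. -/
lemma schwartz_zippel' {F : Type*} [Field F] [Fintype F] [DecidableEq F] :
    ∀ (N : ℕ) (f : MvPolynomial (Fin N) F), f ≠ 0 → ∀ (D : ℕ), (∀ i, f.degreeOf i ≤ D) →
    (Finset.univ.filter fun a : Fin N → F => MvPolynomial.eval a f = 0).card
      ≤ N * D * (Fintype.card F) ^ (N - 1) := by
  intro N
  induction N with
  | zero =>
    intro f hf D _
    convert Nat.zero_le _
    rw [Finset.card_eq_zero, Finset.filter_eq_empty_iff]
    intro a _
    exact eval_ne_zero_of_ne_zero' f hf a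
  | succ N ih =>
    intro f hf D hD
    classical
    set q := finSuccEquiv F N f with hqdef
    have hq0 : q ≠ 0 := by
      intro h
      apply hf
      apply (finSuccEquiv F N).injective
      rw [map_zero]
      exact h
    set g := q.coeff q.natDegree with hgdef
    have hg0 : g ≠ 0 := Polynomial.leadingCoeff_ne_zero.mpr hq0
    set S : Finset (Fin N → F) := Finset.univ.filter fun t => eval t g = 0 with hSdef
    have hS : S.card ≤ N * D * (Fintype.card F) ^ (N - 1) := by
      refine ih g hg0 D fun j => le_trans ?_ (hD j.succ)
      exact MvPolynomial.degreeOf_coeff_finSuccEquiv f j q.natDegree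
    have hfib : (Finset.univ.filter fun a : Fin (N+1) → F => eval a f = 0).card
        = ∑ t : Fin N → F, ((Finset.univ.filter fun a : Fin (N+1) → F =>
            eval a f = 0 ∧ Fin.tail a = t)).card := by
      rw [Finset.card_eq_sum_card_fiberwise (f := Fin.tail)
        (t := (Finset.univ : Finset (Fin N → F))) (fun x _ => Finset.mem_univ _)]
      congr 1
      ext t
      congr 1
      ext a
      simp [Finset.mem_filter, and_assoc]
    rw [hfib]
    have hfb : ∀ t : Fin N → F, ((Finset.univ.filter fun a : Fin (N+1) → F =>
        eval a f = 0 ∧ Fin.tail a = t)).card ≤ if t ∈ S then Fintype.card F else D := by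
      intro t
      by_cases ht : t ∈ S
      · rw [if_pos ht]
        apply Finset.card_le_card_of_injOn (fun a => a 0) (fun a _ => Finset.mem_univ _)
        intro a ha b hb hab
        simp only [Finset.mem_coe, Finset.mem_filter] at ha hb
        have hab' : a 0 = b 0 := hab
        have : Fin.cons (a 0) (Fin.tail a) = Fin.cons (b 0) (Fin.tail b) := by
          rw [ha.2.2, hb.2.2, hab']
        rw [Fin.cons_self_tail, Fin.cons_self_tail] at this
        exact this
      · rw [if_neg ht]
        have hqt : q.map (eval t) ≠ 0 := by
          intro h
          apply ht
          rw [hSdef, Finset.mem_filter]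
          refine ⟨Finset.mem_univ _, ?_⟩
          have := congrArg (fun r => Polynomial.coeff r q.natDegree) h
          simpa [Polynomial.coeff_map, hgdef] using this
        calc ((Finset.univ.filter fun a : Fin (N+1) → F => eval a f = 0 ∧ Fin.tail a = t)).card
            ≤ (Finset.univ.filter fun x : F => Polynomial.eval x (q.map (eval t)) = 0).card := by
              apply Finset.card_le_card_of_injOn (fun a => a 0)
              · intro a ha
                simp only [Finset.mem_coe, Finset.mem_filter, Finset.mem_univ, true_and] at ha ⊢
                obtain ⟨h1, h2⟩ := ha
                rw [← h2, ← MvPolynomial.eval_eq_eval_mv_eval']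
                rwa [Fin.cons_self_tail a]
              · intro a ha b hb hab
                simp only [Finset.mem_coe, Finset.mem_filter] at ha hb
                have hab' : a 0 = b 0 := hab
                have : Fin.cons (a 0) (Fin.tail a) = Fin.cons (b 0) (Fin.tail b) := by
                  rw [ha.2.2, hb.2.2, hab']
                rw [Fin.cons_self_tail, Fin.cons_self_tail] at this
                exact this
          _ ≤ (q.map (eval t)).natDegree := poly_root_card' _ hqt
          _ ≤ q.natDegree := Polynomial.natDegree_map_le
          _ ≤ D := by rw [MvPolynomial.natDegree_finSuccEquiv]; exact hD 0
    calc ∑ t : Fin N → F, ((Finset.univ.filter fun a : Fin (N+1) → F =>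
            eval a f = 0 ∧ Fin.tail a = t)).card
        ≤ ∑ t : Fin N → F, (if t ∈ S then Fintype.card F else D) :=
          Finset.sum_le_sum fun t _ => hfb t
      _ ≤ S.card * Fintype.card F + (Fintype.card F) ^ N * D := by
          have h1 : (Finset.univ.filter fun t : Fin N → F => t ∈ S) = S := by
            ext t; simp
          rw [Finset.sum_ite, Finset.sum_const, Finset.sum_const, h1, smul_eq_mul, smul_eq_mul]
          gcongr
          refine le_trans (Finset.card_filter_le _ _) ?_
          rw [Finset.card_univ, Fintype.card_fun, Fintype.card_fin]
      _ ≤ (N * D * (Fintype.card F) ^ (N - 1)) * Fintype.card F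
            + (Fintype.card F) ^ N * D := by gcongr
      _ ≤ (N+1) * D * (Fintype.card F) ^ N := by
          have hpow : N * D * (Fintype.card F) ^ (N - 1) * Fintype.card F
              ≤ N * D * (Fintype.card F) ^ N := by
            cases N with
            | zero => simp
            | succ k =>
              rw [Nat.add_sub_cancel, mul_assoc, ← pow_succ]
          calc N * D * (Fintype.card F) ^ (N - 1) * Fintype.card F
                + (Fintype.card F) ^ N * D
              ≤ N * D * (Fintype.card F) ^ N + (Fintype.card F) ^ N * D :=
                Nat.add_le_add_right hpow _
            _ = (N+1) * D * (Fintype.card F) ^ N := by ring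

end Aux

/-- The coefficient array `a` (defining linear forms `λ_i(z) = ∑_j a_{i,j} z_j`) is good
up to `B`: every tree certificate `(w, T₁, …, T_d)` with `2 ≤ w ≤ B`, colors in `[m]`,
and pairwise disjoint tree color sets has nonvanishing certificate determinant at `a`. -/
def GoodUpTo (p m d B : ℕ) (a : Fin m → Fin d → ZMod p) : Prop :=
  ∀ n : ℕ, 1 ≤ n → n + 1 ≤ B →
    ∀ (edges : Fin d → Fin n → Fin (n + 1) × Fin (n + 1)) (col : Fin d → Fin n → Fin m),
      (∀ r, IsSpanningTreeList n (edges r)) →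
      (Pairwise fun r r' : Fin d =>
        Disjoint (Finset.univ.image (col r)) (Finset.univ.image (col r'))) →
      (certMatrix (ZMod p) m d n edges col a).det ≠ 0

section Tree

lemma tree_kernel' {F : Type*} [Field F] (n : ℕ)
    (edges : Fin n → Fin (n + 1) × Fin (n + 1)) (h : IsSpanningTreeList n edges)
    (v : Fin n → F)
    (hv : ∀ e, ∑ s, ((if (edges e).1 = Fin.castSucc s then (1:F) else 0)
        - (if (edges e).2 = Fin.castSucc s then (1:F) else 0)) * v s = 0) : v = 0 := by
  classical
  set w : Fin (n+1) → F := Fin.lastCases 0 v with hw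
  have key : ∀ x : Fin (n+1), (∑ s, (if x = Fin.castSucc s then (1:F) else 0) * v s) = w x := by
    intro x
    induction x using Fin.lastCases with
    | last =>
      rw [hw]
      simp only [Fin.lastCases_last]
      apply Finset.sum_eq_zero
      intro s _
      rw [if_neg (Fin.castSucc_lt_last s).ne', zero_mul]
    | cast t =>
      rw [hw]
      simp only [Fin.lastCases_castSucc]
      rw [Finset.sum_eq_single t]
      · rw [if_pos rfl, one_mul]
      · intro s _ hst
        rw [if_neg (fun hc => hst (Fin.castSucc_injective n hc.symm)), zero_mul]
      · intro hs
        exact absurd (Finset.mem_univ t) hs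
  have hedge : ∀ e, w (edges e).1 = w (edges e).2 := by
    intro e
    have h0 := hv e
    simp only [sub_mul, Finset.sum_sub_distrib] at h0
    rw [key, key] at h0
    exact sub_eq_zero.mp h0
  have hadj : ∀ x y : Fin (n+1),
      (SimpleGraph.fromRel (fun a b : Fin (n+1) => ∃ e, edges e = (a, b))).Adj x y →
      w x = w y := by
    intro x y hxy
    rw [SimpleGraph.fromRel_adj] at hxy
    rcases hxy.2 with ⟨e, he⟩ | ⟨e, he⟩
    · simpa [he] using hedge e
    · have h2 : w y = w x := by simpa [he] using hedge e
      exact h2.symm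
  have hconst : ∀ x y : Fin (n+1),
      (SimpleGraph.fromRel (fun a b : Fin (n+1) => ∃ e, edges e = (a, b))).Reachable x y →
      w x = w y := by
    intro x y hr
    obtain ⟨wk⟩ := hr
    induction wk with
    | nil => rfl
    | cons ha p ih => exact (hadj _ _ ha).trans ih
  funext s
  have h1 := hconst (Fin.castSucc s) (Fin.last n) (h.2.preconnected _ _)
  simp only [hw, Fin.lastCases_castSucc, Fin.lastCases_last] at h1
  exact h1

/-- The determinant of the certificate matrix at indicator coefficients is nonzero. -/
lemma certMatrix_det_indicator_ne_zero {F : Type*} [Field F] [DecidableEq F] (m d n : ℕ)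
    (edges : Fin d → Fin n → Fin (n + 1) × Fin (n + 1))
    (col : Fin d → Fin n → Fin m)
    (htree : ∀ r, IsSpanningTreeList n (edges r))
    (hdisj : Pairwise fun r r' : Fin d =>
      Disjoint (Finset.univ.image (col r)) (Finset.univ.image (col r'))) :
    (certMatrix F m d n edges col
      (fun i j => if ∃ e, col j e = i then (1 : F) else 0)).det ≠ 0 := by
  classical
  intro hdet
  obtain ⟨v, hv0, hv⟩ := Matrix.exists_mulVec_eq_zero_iff.mpr hdet
  apply hv0
  have hrow : ∀ r : Fin d, (fun s => v (r, s)) = 0 := by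
    intro r
    apply tree_kernel' n (edges r) (htree r)
    intro e
    have h0 := congrFun hv (r, e)
    simp only [Matrix.mulVec, dotProduct, certMatrix, Matrix.of_apply,
      Pi.zero_apply] at h0
    rw [Fintype.sum_prod_type] at h0
    have hcoef : ∀ j : Fin d,
        (if ∃ e', col j e' = col r e then (1 : F) else 0) = if j = r then 1 else 0 := by
      intro j
      by_cases hjr : j = r
      · subst hjr
        rw [if_pos rfl, if_pos ⟨e, rfl⟩]
      · rw [if_neg hjr]
        rw [if_neg]
        rintro ⟨e', he'⟩
        have : col r e ∈ (Finset.univ.image (col j)) ∩ (Finset.univ.image (col r)) := by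
          simp only [Finset.mem_inter, Finset.mem_image]
          exact ⟨⟨e', Finset.mem_univ _, he'⟩, ⟨e, Finset.mem_univ _, rfl⟩⟩
        rw [Finset.disjoint_iff_inter_eq_empty.mp (hdisj hjr)] at this
        exact absurd this (Finset.notMem_empty _)
    have h1 : ∀ j : Fin d, ∑ s : Fin n,
        ((if (edges r e).1 = Fin.castSucc s then (1:F) else 0)
          - (if (edges r e).2 = Fin.castSucc s then (1:F) else 0))
          * (if ∃ e', col j e' = col r e then (1 : F) else 0) * v (j, s)
        = if j = r then ∑ s : Fin n,
            ((if (edges r e).1 = Fin.castSucc s then (1:F) else 0)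
              - (if (edges r e).2 = Fin.castSucc s then (1:F) else 0)) * v (r, s)
          else 0 := by
      intro j
      rw [hcoef j]
      by_cases hjr : j = r
      · subst hjr
        simp
      · simp [hjr]
    rw [Finset.sum_congr rfl (fun j _ => h1 j), Finset.sum_ite_eq' Finset.univ r] at h0
    rw [if_pos (Finset.mem_univ r)] at h0
    exact h0
  funext js
  have := congrFun (hrow js.1) js.2
  simpa using this

end Tree

section Poly

open MvPolynomial

noncomputable def certPoly (F : Type*) [Field F] (m d n : ℕ)
    (edges : Fin d → Fin n → Fin (n + 1) × Fin (n + 1))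
    (col : Fin d → Fin n → Fin m) : MvPolynomial (Fin (m * d)) F :=
  Matrix.det (Matrix.of fun re js : Fin d × Fin n =>
    (C ((if (edges re.1 re.2).1 = Fin.castSucc js.2 then (1 : F) else 0) -
        (if (edges re.1 re.2).2 = Fin.castSucc js.2 then (1 : F) else 0)) *
      X (finProdFinEquiv (col re.1 re.2, js.1)) : MvPolynomial (Fin (m * d)) F))

lemma certPoly_eval {F : Type*} [Field F] (m d n : ℕ)
    (edges : Fin d → Fin n → Fin (n + 1) × Fin (n + 1))
    (col : Fin d → Fin n → Fin m) (b : Fin (m * d) → F) :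
    eval b (certPoly F m d n edges col)
      = (certMatrix F m d n edges col (fun i j => b (finProdFinEquiv (i, j)))).det := by
  rw [certPoly, RingHom.map_det]
  congr 1
  ext re js
  simp [certMatrix, Matrix.map_apply]

lemma certPoly_totalDegree {F : Type*} [Field F] (m d n : ℕ)
    (edges : Fin d → Fin n → Fin (n + 1) × Fin (n + 1))
    (col : Fin d → Fin n → Fin m) :
    (certPoly F m d n edges col).totalDegree ≤ d * n := by
  rw [certPoly, Matrix.det_apply]
  refine le_trans (totalDegree_finset_sum _ _) ?_
  refine Finset.sup_le fun σ _ => ?_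
  refine le_trans (totalDegree_smul_le _ _) ?_
  refine le_trans (totalDegree_finset_prod _ _) ?_
  refine le_trans (Finset.sum_le_card_nsmul _ _ 1 fun i _ => ?_) ?_
  · refine le_trans (totalDegree_mul _ _) ?_
    rw [totalDegree_C, totalDegree_X]
  · simp [Finset.card_univ, mul_comm]

/-- Per-certificate Schwartz–Zippel bound. -/
lemma cert_zero_count (p m d n : ℕ) [Fact p.Prime] [NeZero p]
    (edges : Fin d → Fin n → Fin (n + 1) × Fin (n + 1))
    (col : Fin d → Fin n → Fin m)
    (htree : ∀ r, IsSpanningTreeList n (edges r))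
    (hdisj : Pairwise fun r r' : Fin d =>
      Disjoint (Finset.univ.image (col r)) (Finset.univ.image (col r'))) :
    (Finset.univ.filter fun a : Fin m → Fin d → ZMod p =>
      (certMatrix (ZMod p) m d n edges col a).det = 0).card
      ≤ (m * d) * (d * n) * p ^ (m * d - 1) := by
  classical
  have hne : certPoly (ZMod p) m d n edges col ≠ 0 := by
    intro h
    have h1 := certPoly_eval m d n edges col
      (fun k => if ∃ e, col (finProdFinEquiv.symm k).2 e = (finProdFinEquiv.symm k).1
        then (1 : ZMod p) else 0)
    rw [h, map_zero] at h1
    apply certMatrix_det_indicator_ne_zero m d n edges col htree hdisj (F := ZMod p)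
    rw [show (fun i j => if ∃ e, col j e = i then (1 : ZMod p) else 0)
        = (fun i j => if ∃ e, col ((finProdFinEquiv.symm (finProdFinEquiv (i, j))).2) e
            = (finProdFinEquiv.symm (finProdFinEquiv (i, j))).1 then (1 : ZMod p) else 0) by
      funext i j; simp]
    exact h1.symm
  have hdeg : ∀ i, (certPoly (ZMod p) m d n edges col).degreeOf i ≤ d * n :=
    fun i => le_trans (degreeOf_le_totalDegree _ i) (certPoly_totalDegree m d n edges col)
  have hsz := schwartz_zippel' (m * d) (certPoly (ZMod p) m d n edges col) hne (d * n) hdeg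
  rw [ZMod.card] at hsz
  refine le_trans ?_ hsz
  apply Finset.card_le_card_of_injOn
    (fun a => fun k => a (finProdFinEquiv.symm k).1 (finProdFinEquiv.symm k).2)
  · intro a ha
    simp only [Finset.mem_coe, Finset.mem_filter, Finset.mem_univ, true_and] at ha ⊢
    rw [certPoly_eval]
    rw [show (fun i j => a (finProdFinEquiv.symm (finProdFinEquiv (i, j))).1
        (finProdFinEquiv.symm (finProdFinEquiv (i, j))).2) = a by funext i j; simp]
    exact ha
  · intro a _ b _ hab
    funext i j
    have := congrFun hab (finProdFinEquiv (i, j))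
    simpa using this

end Poly

/-- Random forms avoid all small certificates: independent uniform coefficients
`a_{i,j} ∈ 𝔽_p` are good up to `B` with probability at least
`1 - d B² (B² m)^{dB} / p`. -/
theorem stmt_12 (B m d p : ℕ) (hB : 2 ≤ B) (hm : 1 ≤ m) (hd : 1 ≤ d) (hp : p.Prime) :
    (1 - ((d : ℝ) * (B : ℝ) ^ 2 * ((B : ℝ) ^ 2 * (m : ℝ)) ^ (d * B)) / (p : ℝ)) *
        ((p : ℝ) ^ (m * d)) ≤
      (Nat.card {a : Fin m → Fin d → ZMod p // GoodUpTo p m d B a} : ℝ) := by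
  classical
  haveI : Fact p.Prime := ⟨hp⟩
  haveI : NeZero p := ⟨hp.ne_zero⟩
  set good := (Finset.univ.filter fun a : Fin m → Fin d → ZMod p =>
    GoodUpTo p m d B a).card with hgood
  set bad := (Finset.univ.filter fun a : Fin m → Fin d → ZMod p =>
    ¬ GoodUpTo p m d B a).card with hbaddef
  have hcard : Nat.card {a : Fin m → Fin d → ZMod p // GoodUpTo p m d B a} = good := by
    rw [Nat.card_eq_fintype_card, Fintype.card_subtype]
  have htot : good + bad = p ^ (m * d) := by
    rw [hgood, hbaddef, Finset.card_filter_add_card_filter_not, Finset.card_univ,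
      Fintype.card_fun, Fintype.card_fun, Fintype.card_fin, Fintype.card_fin, ZMod.card,
      ← pow_mul, mul_comm d m]
  set C : ℕ := d * B ^ 2 * (B ^ 2 * m) ^ (d * B) with hC
  -- bound the bad set
  have hbad : bad ≤ C * p ^ (m * d - 1) := by
    have hsub : (Finset.univ.filter fun a : Fin m → Fin d → ZMod p =>
        ¬ GoodUpTo p m d B a)
        ⊆ (Finset.Icc 1 (B - 1)).biUnion (fun n =>
            (Finset.univ : Finset ((Fin d → Fin n → Fin (n + 1) × Fin (n + 1))
                × (Fin d → Fin n → Fin m))).biUnion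
              (fun ec => if ((∀ r, IsSpanningTreeList n (ec.1 r)) ∧
                  Pairwise fun r r' : Fin d =>
                    Disjoint (Finset.univ.image (ec.2 r)) (Finset.univ.image (ec.2 r')))
                then Finset.univ.filter (fun a : Fin m → Fin d → ZMod p =>
                  (certMatrix (ZMod p) m d n ec.1 ec.2 a).det = 0)
                else ∅)) := by
      intro a ha
      simp only [Finset.mem_filter, Finset.mem_univ, true_and] at ha
      rw [GoodUpTo] at ha
      push_neg at ha
      obtain ⟨n, h1, h2, edges, col, htree, hdisj, hdet⟩ := ha
      rw [Finset.mem_biUnion]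
      refine ⟨n, by rw [Finset.mem_Icc]; omega, ?_⟩
      rw [Finset.mem_biUnion]
      refine ⟨(edges, col), Finset.mem_univ _, ?_⟩
      rw [if_pos ⟨htree, hdisj⟩, Finset.mem_filter]
      exact ⟨Finset.mem_univ _, hdet⟩
    refine le_trans (Finset.card_le_card hsub) ?_
    refine le_trans Finset.card_biUnion_le ?_
    set T : ℕ := (B ^ 2 * m) ^ (d * (B - 1)) * ((m * d) * (d * (B - 1)) * p ^ (m * d - 1))
      with hT
    have hterm : ∀ n ∈ Finset.Icc 1 (B - 1),
        ((Finset.univ : Finset ((Fin d → Fin n → Fin (n + 1) × Fin (n + 1))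
            × (Fin d → Fin n → Fin m))).biUnion
          (fun ec => if ((∀ r, IsSpanningTreeList n (ec.1 r)) ∧
              Pairwise fun r r' : Fin d =>
                Disjoint (Finset.univ.image (ec.2 r)) (Finset.univ.image (ec.2 r')))
            then Finset.univ.filter (fun a : Fin m → Fin d → ZMod p =>
              (certMatrix (ZMod p) m d n ec.1 ec.2 a).det = 0)
            else ∅)).card ≤ T := by
      intro n hn
      rw [Finset.mem_Icc] at hn
      refine le_trans Finset.card_biUnion_le ?_
      have hone : ∀ ec : (Fin d → Fin n → Fin (n + 1) × Fin (n + 1))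
          × (Fin d → Fin n → Fin m),
          (if ((∀ r, IsSpanningTreeList n (ec.1 r)) ∧
              Pairwise fun r r' : Fin d =>
                Disjoint (Finset.univ.image (ec.2 r)) (Finset.univ.image (ec.2 r')))
            then Finset.univ.filter (fun a : Fin m → Fin d → ZMod p =>
              (certMatrix (ZMod p) m d n ec.1 ec.2 a).det = 0)
            else ∅).card ≤ (m * d) * (d * n) * p ^ (m * d - 1) := by
        intro ec
        split_ifs with hvalid
        · exact cert_zero_count p m d n ec.1 ec.2 hvalid.1 hvalid.2
        · simp
      refine le_trans (Finset.sum_le_sum fun ec _ => hone ec) ?_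
      rw [Finset.sum_const, Finset.card_univ, smul_eq_mul]
      have hcardec : Fintype.card ((Fin d → Fin n → Fin (n + 1) × Fin (n + 1))
          × (Fin d → Fin n → Fin m)) = (((n+1)*(n+1)) ^ n) ^ d * (m ^ n) ^ d := by
        rw [Fintype.card_prod, Fintype.card_fun, Fintype.card_fun, Fintype.card_fun,
          Fintype.card_fun, Fintype.card_prod, Fintype.card_fin, Fintype.card_fin,
          Fintype.card_fin, Fintype.card_fin]
      rw [hcardec, hT]
      have hbase : (((n+1)*(n+1)) ^ n) ^ d * (m ^ n) ^ d = ((n+1)*(n+1) * m) ^ (d * n) := by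
        rw [← mul_pow, ← mul_pow, ← pow_mul, mul_comm n d]
      rw [hbase]
      have h1 : ((n+1)*(n+1) * m) ^ (d * n) ≤ (B ^ 2 * m) ^ (d * (B - 1)) := by
        calc ((n+1)*(n+1) * m) ^ (d * n) ≤ (B ^ 2 * m) ^ (d * n) := by
              apply Nat.pow_le_pow_left
              calc (n+1)*(n+1)*m ≤ B*B*m := by gcongr <;> omega
                _ = B ^ 2 * m := by ring
          _ ≤ (B ^ 2 * m) ^ (d * (B - 1)) := by
              apply Nat.pow_le_pow_right
              · exact Nat.mul_pos (pow_pos (by omega) 2) hm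
              · exact Nat.mul_le_mul le_rfl hn.2
      exact Nat.mul_le_mul h1 (Nat.mul_le_mul
        (Nat.mul_le_mul le_rfl (Nat.mul_le_mul le_rfl hn.2)) le_rfl)
    refine le_trans (Finset.sum_le_card_nsmul _ _ T hterm) ?_
    rw [Nat.card_Icc, smul_eq_mul]
    -- (B - 1 + 1 - 1) = B - 1
    have hIcc : B - 1 + 1 - 1 = B - 1 := by omega
    rw [hIcc, hT, hC]
    -- numeric inequality
    have hdm : d * m ≤ (B ^ 2 * m) ^ d := by
      calc d * m ≤ 4 ^ d * m ^ d := by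
            gcongr
            · calc d ≤ 2 ^ d := Nat.le_of_lt (Nat.lt_two_pow_self)
                _ ≤ 4 ^ d := Nat.pow_le_pow_left (by norm_num) d
            · exact Nat.le_self_pow (Nat.one_le_iff_ne_zero.mp hd) m
        _ = (4 * m) ^ d := by rw [mul_pow]
        _ ≤ (B ^ 2 * m) ^ d := by
            gcongr
            calc (4:ℕ) = 2 ^ 2 := by norm_num
              _ ≤ B ^ 2 := Nat.pow_le_pow_left hB 2
    calc (B - 1) * ((B ^ 2 * m) ^ (d * (B - 1)) * ((m * d) * (d * (B - 1)) * p ^ (m * d - 1)))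
        = ((B ^ 2 * m) ^ (d * (B - 1)) * (d * ((B - 1) * (B - 1) * (m * d)))) * p ^ (m * d - 1)
          := by ring
      _ ≤ ((B ^ 2 * m) ^ (d * (B - 1)) * (d * (B ^ 2 * (B ^ 2 * m) ^ d))) * p ^ (m * d - 1)
          := by
            have hdm' : (B - 1) * (B - 1) * (m * d) ≤ B ^ 2 * (B ^ 2 * m) ^ d := by
              calc (B - 1) * (B - 1) * (m * d) ≤ B * B * (m * d) := by gcongr <;> omega
                _ = B ^ 2 * (m * d) := by ring
                _ ≤ B ^ 2 * (B ^ 2 * m) ^ d := by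
                    have h2 : m * d ≤ (B ^ 2 * m) ^ d := by rw [mul_comm]; exact hdm
                    exact Nat.mul_le_mul le_rfl h2
            exact Nat.mul_le_mul (Nat.mul_le_mul le_rfl
              (Nat.mul_le_mul le_rfl hdm')) le_rfl
      _ = (d * B ^ 2 * ((B ^ 2 * m) ^ (d * (B - 1)) * (B ^ 2 * m) ^ d)) * p ^ (m * d - 1)
          := by ring
      _ = d * B ^ 2 * (B ^ 2 * m) ^ (d * B) * p ^ (m * d - 1) := by
            rw [← pow_add]
            congr 2
            have : d * (B - 1) + d = d * B := by
              cases B with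
              | zero => omega
              | succ k => simp [Nat.mul_succ]
            rw [this]
  -- transfer to ℝ
  rw [hcard]
  have hgr : (good : ℝ) = (p : ℝ) ^ (m * d) - (bad : ℝ) := by
    have := congrArg (Nat.cast : ℕ → ℝ) htot
    push_cast at this
    linarith
  rw [hgr]
  have hppos : (0 : ℝ) < (p : ℝ) := by
    exact_mod_cast hp.pos
  have hpow : (p : ℝ) ^ (m * d) = (p : ℝ) * (p : ℝ) ^ (m * d - 1) := by
    rw [← pow_succ']
    congr 1
    have : 1 ≤ m * d := Nat.one_le_iff_ne_zero.mpr (by positivity)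
    omega
  have hkey : ((d : ℝ) * (B : ℝ) ^ 2 * ((B : ℝ) ^ 2 * (m : ℝ)) ^ (d * B)) / (p : ℝ)
      * ((p : ℝ) ^ (m * d)) = (C : ℝ) * (p : ℝ) ^ (m * d - 1) := by
    rw [hpow, hC]
    push_cast
    field_simp
  have hbadR : (bad : ℝ) ≤ (C : ℝ) * (p : ℝ) ^ (m * d - 1) := by
    exact_mod_cast hbad
  nlinarith [pow_pos hppos (m * d), hkey]
end

section
/- Let α, ε ∈ (0,1), d ∈ ℤ⁺, K = (1+ε)/(1−α), μ = (1−α)ε/(2(1+ε)), β = μ/2, θ = μ/(1−μ), and let C_gr = C_gr(β,d) be the constant from the matchings-force-disjoint-trees lemma. Let B ≥ 2, n ≥ (C_gr/θ)·Λ(B), let p be prime, and suppose linear forms λ₁, …, λ_n : 𝔽_p^d → 𝔽_p are good up to B. Then there is no set A ⊆ 𝔽_p^d with 2 ≤ |A| ≤ B and |A| > K·ℓ, together with sets S₁, …, S_n ⊆ 𝔽_p of size ℓ each, such that every a ∈ A satisfies |{i : λ_i(a) ∉ S_i}| ≤ α·n. -/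
/-- `Λ(b) = max {1, log b · log log (4b)}` (natural logarithms). -/
noncomputable def Lam (b : ℝ) : ℝ := max 1 (Real.log b * Real.log (Real.log (4 * b)))

/-- `C` is a valid constant for the "large color matchings force color-disjoint spanning
trees" lemma with parameters `β` and `d`. -/
def MatchingsForceTrees (β : ℝ) (d : ℕ) (C : ℝ) : Prop :=
  ∀ (b m : ℕ), 2 ≤ b → C * Lam (b : ℝ) ≤ (m : ℝ) →
  ∀ (V E : Type) [Fintype V] [Fintype E],
    Fintype.card V = b →
    ∀ (ends : E → V × V) (color : E → Fin m),
      (∀ e, (ends e).1 ≠ (ends e).2) →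
      (∀ e e', e ≠ e' → color e = color e' →
        (ends e).1 ≠ (ends e').1 ∧ (ends e).1 ≠ (ends e').2 ∧
        (ends e).2 ≠ (ends e').1 ∧ (ends e).2 ≠ (ends e').2) →
      (∀ c : Fin m, β * (b : ℝ) ≤ (Nat.card {e : E // color e = c} : ℝ)) →
      ∃ W : Finset V, 2 ≤ W.card ∧
        ∃ F : Fin d → Finset E,
          (∀ r, ∀ e ∈ F r, (ends e).1 ∈ W ∧ (ends e).2 ∈ W) ∧
          (∀ r, (F r).card = W.card - 1) ∧
          (∀ r, (SimpleGraph.fromRel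
            (fun v u : {x : V // x ∈ W} => ∃ e ∈ F r, ends e = (v.1, u.1))).Connected) ∧
          (Pairwise fun r r' : Fin d => Disjoint ((F r).image color) ((F r').image color))

private lemma lam_mono {x y : ℝ} (hx : 2 ≤ x) (hxy : x ≤ y) : Lam x ≤ Lam y := by
  unfold Lam
  apply max_le_max le_rfl
  have hy : (2:ℝ) ≤ y := le_trans hx hxy
  have he : Real.exp 1 < 3 := lt_trans Real.exp_one_lt_d9 (by norm_num)
  have h1x : (1:ℝ) ≤ Real.log (4 * x) := by
    rw [← Real.log_exp 1]
    exact Real.log_le_log (Real.exp_pos 1) (by linarith)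
  have h1y : (1:ℝ) ≤ Real.log (4 * y) := by
    rw [← Real.log_exp 1]
    exact Real.log_le_log (Real.exp_pos 1) (by linarith)
  have hlx : (0:ℝ) ≤ Real.log x := Real.log_nonneg (by linarith)
  have hll : Real.log (Real.log (4 * x)) ≤ Real.log (Real.log (4 * y)) := by
    apply Real.log_le_log (by linarith)
    exact Real.log_le_log (by linarith) (by linarith)
  have hlln : (0:ℝ) ≤ Real.log (Real.log (4 * x)) := Real.log_nonneg h1x
  have hlxy : Real.log x ≤ Real.log y := Real.log_le_log (by linarith) hxy
  exact mul_le_mul hlxy hll hlln (le_trans hlx hlxy)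

private lemma aux_row_sum {R : Type*} [CommRing R] (nn : ℕ) (u : Fin (nn+1)) (f : Fin (nn+1) → R)
    (hlast : f (Fin.last nn) = 0) :
    ∑ j : Fin nn, (if u = Fin.castSucc j then (1:R) else 0) * f (Fin.castSucc j) = f u := by
  cases u using Fin.lastCases with
  | last =>
    rw [hlast]
    apply Finset.sum_eq_zero
    intro j _
    rw [if_neg (Fin.castSucc_lt_last j).ne', zero_mul]
  | cast j0 =>
    rw [Finset.sum_eq_single j0]
    · rw [if_pos rfl, one_mul]
    · intro j _ hne
      rw [if_neg (fun h => hne (Fin.castSucc_inj.mp h).symm), zero_mul]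
    · intro h; exact absurd (Finset.mem_univ _) h

private noncomputable def pairFun {V : Type*} (T : Finset V) (j : Fin (T.card / 2)) : V × V :=
  ((T.equivFin.symm ⟨2 * j.1, by have := j.2; omega⟩ : T).1,
   (T.equivFin.symm ⟨2 * j.1 + 1, by have := j.2; omega⟩ : T).1)

private lemma pairFun_mem₁ {V : Type*} (T : Finset V) (j : Fin (T.card / 2)) :
    (pairFun T j).1 ∈ T := (T.equivFin.symm _).2

private lemma pairFun_mem₂ {V : Type*} (T : Finset V) (j : Fin (T.card / 2)) :
    (pairFun T j).2 ∈ T := (T.equivFin.symm _).2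

private lemma pairFun_inj {V : Type*} (T : Finset V) {k k' : Fin T.card}
    (h : (T.equivFin.symm k : T).1 = (T.equivFin.symm k' : T).1) : k = k' :=
  T.equivFin.symm.injective (Subtype.ext h)

private lemma pairFun_ne {V : Type*} (T : Finset V) (j : Fin (T.card / 2)) :
    (pairFun T j).1 ≠ (pairFun T j).2 := by
  intro h
  have := congrArg Fin.val (pairFun_inj T h)
  simp at this

private lemma pairFun_disj {V : Type*} (T : Finset V) {j j' : Fin (T.card / 2)} (h : j ≠ j') :
    (pairFun T j).1 ≠ (pairFun T j').1 ∧ (pairFun T j).1 ≠ (pairFun T j').2 ∧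
    (pairFun T j).2 ≠ (pairFun T j').1 ∧ (pairFun T j).2 ≠ (pairFun T j').2 := by
  have hv : j.1 ≠ j'.1 := fun hv => h (Fin.ext hv)
  refine ⟨fun he => ?_, fun he => ?_, fun he => ?_, fun he => ?_⟩ <;>
    · have := congrArg Fin.val (pairFun_inj T he)
      simp at this
      omega

private abbrev EdgeT {n : ℕ} {σ V : Type} (G : Finset (Fin n)) (S : Fin n → Finset σ)
    (fib : Fin n → σ → Finset V) : Type :=
  (i : {i : Fin n // i ∈ G}) × (s : {s : σ // s ∈ S i.1}) × Fin ((fib i.1 s.1).card / 2)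

private noncomputable def endsF {n : ℕ} {σ V : Type} (G : Finset (Fin n)) (S : Fin n → Finset σ)
    (fib : Fin n → σ → Finset V) (e : EdgeT G S fib) : V × V :=
  pairFun (fib e.1.1 e.2.1.1) e.2.2

private noncomputable def colorF {n : ℕ} {σ V : Type} (G : Finset (Fin n)) (S : Fin n → Finset σ)
    (fib : Fin n → σ → Finset V) (e : EdgeT G S fib) : Fin G.card :=
  G.equivFin e.1

private lemma endsF_mem₁ {n : ℕ} {σ V : Type} (G : Finset (Fin n)) (S : Fin n → Finset σ)
    (fib : Fin n → σ → Finset V) (e : EdgeT G S fib) :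
    (endsF G S fib e).1 ∈ fib e.1.1 e.2.1.1 := pairFun_mem₁ _ _

private lemma endsF_mem₂ {n : ℕ} {σ V : Type} (G : Finset (Fin n)) (S : Fin n → Finset σ)
    (fib : Fin n → σ → Finset V) (e : EdgeT G S fib) :
    (endsF G S fib e).2 ∈ fib e.1.1 e.2.1.1 := pairFun_mem₂ _ _

private lemma endsF_ne {n : ℕ} {σ V : Type} (G : Finset (Fin n)) (S : Fin n → Finset σ)
    (fib : Fin n → σ → Finset V) (e : EdgeT G S fib) :
    (endsF G S fib e).1 ≠ (endsF G S fib e).2 := pairFun_ne _ _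

private lemma colorF_eq {n : ℕ} {σ V : Type} (G : Finset (Fin n)) (S : Fin n → Finset σ)
    (fib : Fin n → σ → Finset V) {e e' : EdgeT G S fib}
    (h : colorF G S fib e = colorF G S fib e') : e.1 = e'.1 :=
  G.equivFin.injective h

private lemma endsF_disj {n : ℕ} {σ V : Type} (G : Finset (Fin n)) (S : Fin n → Finset σ)
    (fib : Fin n → σ → Finset V)
    (hdisj : ∀ i s s', s ≠ s' → ∀ a, a ∈ fib i s → a ∉ fib i s')
    {e e' : EdgeT G S fib} (hne : e ≠ e') (hi : e.1 = e'.1) :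
    (endsF G S fib e).1 ≠ (endsF G S fib e').1 ∧
    (endsF G S fib e).1 ≠ (endsF G S fib e').2 ∧
    (endsF G S fib e).2 ≠ (endsF G S fib e').1 ∧
    (endsF G S fib e).2 ≠ (endsF G S fib e').2 := by
  obtain ⟨i, s, j⟩ := e
  obtain ⟨i', s', j'⟩ := e'
  cases hi
  by_cases hs : s = s'
  · cases hs
    have hj : j ≠ j' := by
      intro hj; cases hj; exact hne rfl
    exact pairFun_disj _ hj
  · have hsv : s.1 ≠ s'.1 := fun hv => hs (Subtype.ext hv)
    have m1 := endsF_mem₁ G S fib ⟨i, s, j⟩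
    have m2 := endsF_mem₂ G S fib ⟨i, s, j⟩
    have m1' := endsF_mem₁ G S fib ⟨i, s', j'⟩
    have m2' := endsF_mem₂ G S fib ⟨i, s', j'⟩
    refine ⟨fun he => ?_, fun he => ?_, fun he => ?_, fun he => ?_⟩
    · exact hdisj i.1 s.1 s'.1 hsv _ m1 (he ▸ m1')
    · exact hdisj i.1 s.1 s'.1 hsv _ m1 (he ▸ m2')
    · exact hdisj i.1 s.1 s'.1 hsv _ m2 (he ▸ m1')
    · exact hdisj i.1 s.1 s'.1 hsv _ m2 (he ▸ m2')

private lemma card_color_ge {n : ℕ} {σ V : Type} [DecidableEq σ] (G : Finset (Fin n))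
    (S : Fin n → Finset σ) (fib : Fin n → σ → Finset V) (c : Fin G.card) :
    (∑ s ∈ S (G.equivFin.symm c).1, (fib (G.equivFin.symm c).1 s).card / 2 : ℕ) ≤
      Nat.card {e : EdgeT G S fib // colorF G S fib e = c} := by
  set i := G.equivFin.symm c with hi
  have hc : ∀ x : (s : {s : σ // s ∈ S i.1}) × Fin ((fib i.1 s.1).card / 2),
      colorF G S fib ⟨i, x⟩ = c := by
    intro x
    show G.equivFin i = c
    rw [hi, Equiv.apply_symm_apply]
  have hinj : Function.Injective
      (fun (x : (s : {s : σ // s ∈ S i.1}) × Fin ((fib i.1 s.1).card / 2)) =>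
        (⟨⟨i, x⟩, hc x⟩ : {e : EdgeT G S fib // colorF G S fib e = c})) := by
    intro x y hxy
    have h2 : (⟨i, x⟩ : EdgeT G S fib) = ⟨i, y⟩ := congrArg Subtype.val hxy
    exact eq_of_heq (Sigma.mk.inj_iff.mp h2).2
  have hcard : (∑ s ∈ S i.1, (fib i.1 s).card / 2 : ℕ) =
      Nat.card ((s : {s : σ // s ∈ S i.1}) × Fin ((fib i.1 s.1).card / 2)) := by
    rw [Nat.card_eq_fintype_card, Fintype.card_sigma]
    rw [← Finset.sum_coe_sort (S i.1) (fun s => (fib i.1 s).card / 2)]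
    simp
  rw [hcard]
  exact Nat.card_le_card_of_injective _ hinj

set_option maxHeartbeats 1000000 in
/-- Good forms rule out large approximate list intersections.  With
`K = (1+ε)/(1-α)`, `μ = (1-α)ε/(2(1+ε))`, `β = μ/2`, `θ = μ/(1-μ)`, and `C_gr` the
constant from the matchings-force-disjoint-trees lemma for `(β, d)`: if `B ≥ 2`,
`n ≥ (C_gr/θ) Λ(B)`, and the linear forms `λ_i(z) = ∑_j coeff i j * z j` are good up to
`B`, then there is no `A ⊆ 𝔽_p^d` with `2 ≤ |A| ≤ B`, `|A| > K ℓ`, and lists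
`S₁, …, S_n` of size `ℓ` such that every `a ∈ A` has `|{i : λ_i(a) ∉ S_i}| ≤ α n`. -/
theorem stmt_15 (α ε : ℝ) (hα : α ∈ Set.Ioo (0 : ℝ) 1) (hε : ε ∈ Set.Ioo (0 : ℝ) 1)
    (d : ℕ) (hd : 1 ≤ d) (Cgr : ℝ)
    (hCgr : MatchingsForceTrees ((1 - α) * ε / (2 * (1 + ε)) / 2) d Cgr)
    (B : ℕ) (hB : 2 ≤ B) (n : ℕ) (p : ℕ) (hp : p.Prime)
    (hn : (Cgr / (((1 - α) * ε / (2 * (1 + ε))) / (1 - (1 - α) * ε / (2 * (1 + ε))))) *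
        Lam (B : ℝ) ≤ (n : ℝ))
    (coeff : Fin n → Fin d → ZMod p)
    (hgood : GoodUpTo p n d B coeff) :
    ¬ ∃ (A : Finset (Fin d → ZMod p)) (ℓ : ℕ) (S : Fin n → Finset (ZMod p)),
        0 < ℓ ∧ (∀ i, (S i).card = ℓ) ∧
        2 ≤ A.card ∧ A.card ≤ B ∧
        ((1 + ε) / (1 - α)) * (ℓ : ℝ) < (A.card : ℝ) ∧
        ∀ x ∈ A, (Nat.card {i : Fin n // (∑ j, coeff i j * x j) ∉ S i} : ℝ) ≤ α * (n : ℝ) := by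
  classical
  haveI : Fact p.Prime := ⟨hp⟩
  obtain ⟨hα0, hα1⟩ := hα
  obtain ⟨hε0, hε1⟩ := hε
  rintro ⟨A, ℓ, S, hℓpos, hScard, hA2, hAB, hKℓ, hbad⟩
  set μ : ℝ := (1 - α) * ε / (2 * (1 + ε)) with hμdef
  have hεp : (0:ℝ) < 1 + ε := by linarith
  have hαp : (0:ℝ) < 1 - α := by linarith
  have hμ0 : 0 < μ := by
    apply div_pos (by nlinarith) (by linarith)
  have hμhalf : μ < 1/2 := by
    rw [hμdef, div_lt_iff₀ (by linarith : (0:ℝ) < 2*(1+ε))]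
    nlinarith
  have hθ0 : 0 < μ / (1 - μ) := div_pos hμ0 (by linarith)
  -- Cgr is positive
  have hCpos : 0 < Cgr := by
    by_contra hC
    push_neg at hC
    obtain ⟨W, hW2, F, hF1, hF2, hF3, hF4⟩ :=
      hCgr 2 0 le_rfl
        (by
          have h1 : (1:ℝ) ≤ Lam 2 := le_max_left _ _
          have h2 : Cgr * Lam 2 ≤ 0 := mul_nonpos_iff.mpr (Or.inr ⟨hC, by linarith⟩)
          simpa using h2)
        (Fin 2) PEmpty (by simp)
        (fun e => e.elim) (fun e => e.elim)
        (fun e => e.elim) (fun e e' _ _ => e.elim) (fun c => c.elim0)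
    have h0 : (F ⟨0, hd⟩).card = W.card - 1 := hF2 ⟨0, hd⟩
    have h1 : (F ⟨0, hd⟩).card = 0 :=
      Finset.card_eq_zero.mpr (Finset.eq_empty_of_forall_notMem (fun e _ => e.elim))
    omega
  have hLamB : (1:ℝ) ≤ Lam (B:ℝ) := le_max_left _ _
  have hnpos : 0 < n := by
    have h1 : (0:ℝ) < Cgr / (μ / (1-μ)) * Lam (B:ℝ) :=
      mul_pos (div_pos hCpos hθ0) (by linarith)
    have h2 : (0:ℝ) < (n:ℝ) := lt_of_lt_of_le h1 hn
    exact_mod_cast h2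
  have hn0 : (0:ℝ) < (n:ℝ) := by exact_mod_cast hnpos
  set b := A.card with hbdef
  have hb0 : (0:ℝ) < (b:ℝ) := by
    have h : (2:ℝ) ≤ (b:ℝ) := by exact_mod_cast hA2
    linarith
  set lamf : Fin n → (Fin d → ZMod p) → ZMod p := fun i x => ∑ j, coeff i j * x j with hlamf
  have hbad' : ∀ (x : Fin d → ZMod p), x ∈ A →
      (Nat.card {i : Fin n // lamf i x ∉ S i} : ℝ) ≤ α * n := fun x hx => hbad x hx
  set fib : Fin n → ZMod p → Finset {x : Fin d → ZMod p // x ∈ A} :=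
    fun i s => Finset.univ.filter (fun a => lamf i a.1 = s) with hfibdef
  have hfib_mem : ∀ (i : Fin n) (s : ZMod p) (a : {x : Fin d → ZMod p // x ∈ A}),
      a ∈ fib i s ↔ lamf i a.1 = s := by
    intro i s a
    rw [hfibdef]
    simp
  set Ai : Fin n → Finset {x : Fin d → ZMod p // x ∈ A} :=
    fun i => Finset.univ.filter (fun a => lamf i a.1 ∈ S i) with hAidef
  set M : Fin n → ℕ := fun i => ∑ s ∈ S i, (fib i s).card / 2 with hMdef
  have hfib_disj : ∀ (i : Fin n) (s s' : ZMod p), s ≠ s' →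
      ∀ a, a ∈ fib i s → a ∉ fib i s' := by
    intro i s s' hss a ha ha'
    rw [hfib_mem] at ha ha'
    exact hss (ha.symm.trans ha')
  have hAicard : ∀ i, ∑ s ∈ S i, (fib i s).card = (Ai i).card := by
    intro i
    rw [← Finset.card_biUnion
      (fun s _ t _ hst => Finset.disjoint_left.mpr (fun a ha => hfib_disj i s t hst a ha))]
    congr 1
    ext a
    simp only [Finset.mem_biUnion, hfib_mem, hAidef, Finset.mem_filter, Finset.mem_univ, true_and]
    constructor
    · rintro ⟨s, hs, h⟩; rw [h]; exact hs
    · intro h; exact ⟨lamf i a.1, h, rfl⟩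
  -- row bound from hbad
  have hrow : ∀ a : {x : Fin d → ZMod p // x ∈ A},
      (1 - α) * n ≤ ((Finset.univ.filter (fun i : Fin n => lamf i a.1 ∈ S i)).card : ℝ) := by
    intro a
    have h2 : Nat.card {i : Fin n // lamf i a.1 ∉ S i}
        = (Finset.univ.filter (fun i : Fin n => ¬ (lamf i a.1 ∈ S i))).card := by
      rw [Nat.card_eq_fintype_card, Fintype.card_subtype]
    have h3 := Finset.card_filter_add_card_filter_not
      (s := (Finset.univ : Finset (Fin n))) (p := fun i => lamf i a.1 ∈ S i)
    rw [Finset.card_univ, Fintype.card_fin] at h3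
    have h4 : ((Finset.univ.filter (fun i : Fin n => ¬ (lamf i a.1 ∈ S i))).card : ℝ) ≤ α * n := by
      rw [← h2]; exact hbad' a.1 a.2
    have h5 : ((Finset.univ.filter (fun i : Fin n => lamf i a.1 ∈ S i)).card : ℝ)
        + ((Finset.univ.filter (fun i : Fin n => ¬ (lamf i a.1 ∈ S i))).card : ℝ) = (n:ℝ) := by
      exact_mod_cast congrArg (fun t : ℕ => (t:ℝ)) h3
    linarith
  have hswap : ∑ i : Fin n, (Ai i).card
      = ∑ a : {x : Fin d → ZMod p // x ∈ A},
          (Finset.univ.filter (fun i : Fin n => lamf i a.1 ∈ S i)).card := by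
    simp only [hAidef, Finset.card_filter]
    exact Finset.sum_comm
  have hsumAi : (1 - α) * n * b ≤ ∑ i : Fin n, ((Ai i).card : ℝ) := by
    have hcast : ∑ i : Fin n, ((Ai i).card : ℝ) = ((∑ i : Fin n, (Ai i).card : ℕ) : ℝ) := by
      push_cast; ring
    rw [hcast, hswap]
    push_cast
    calc (1 - α) * n * b
        = ∑ _a : {x : Fin d → ZMod p // x ∈ A}, ((1-α) * (n:ℝ)) := by
          rw [Finset.sum_const, Finset.card_univ, Fintype.card_coe, ← hbdef, nsmul_eq_mul]
          ring
      _ ≤ ∑ a : {x : Fin d → ZMod p // x ∈ A},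
            ((Finset.univ.filter (fun i : Fin n => lamf i a.1 ∈ S i)).card : ℝ) :=
          Finset.sum_le_sum (fun a _ => hrow a)
  have hMlow : ∀ i : Fin n, ((Ai i).card : ℝ) ≤ 2 * M i + ℓ := by
    intro i
    have hnat : (Ai i).card ≤ 2 * M i + ℓ := by
      rw [← hAicard i]
      calc ∑ s ∈ S i, (fib i s).card
          ≤ ∑ s ∈ S i, (2 * ((fib i s).card/2) + 1) := Finset.sum_le_sum (fun s _ => by omega)
        _ = 2 * (∑ s ∈ S i, (fib i s).card/2) + ℓ := by
            rw [Finset.sum_add_distrib, ← Finset.mul_sum, Finset.sum_const, smul_eq_mul, mul_one,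
              hScard i]
        _ = 2 * M i + ℓ := by rw [hMdef]
    exact_mod_cast hnat
  have hMup : ∀ i : Fin n, (M i:ℝ) ≤ (b:ℝ)/2 := by
    intro i
    have h2 : 2 * M i ≤ ∑ s ∈ S i, (fib i s).card := by
      rw [hMdef, Finset.mul_sum]
      exact Finset.sum_le_sum (fun s _ => by omega)
    rw [hAicard i] at h2
    have h3 : (Ai i).card ≤ b := by
      have h4 := Finset.card_le_card (Finset.subset_univ (Ai i))
      rwa [Finset.card_univ, Fintype.card_coe, ← hbdef] at h4
    have h5 : 2 * M i ≤ b := le_trans h2 h3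
    have h6 : (2:ℝ) * M i ≤ (b:ℝ) := by exact_mod_cast h5
    linarith
  have hℓb : (ℓ:ℝ) * (1+ε) < (1-α) * b := by
    rw [div_mul_eq_mul_div, div_lt_iff₀ hαp] at hKℓ
    linarith
  have hMsum : μ * n * b < ∑ i : Fin n, (M i : ℝ) := by
    have h2 : ∑ i : Fin n, ((Ai i).card:ℝ) ≤ ∑ i : Fin n, (2 * (M i:ℝ) + ℓ) :=
      Finset.sum_le_sum (fun i _ => hMlow i)
    have h3 : ∑ i : Fin n, (2*(M i:ℝ) + ℓ) = 2 * (∑ i : Fin n, (M i:ℝ)) + n * ℓ := by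
      rw [Finset.sum_add_distrib, ← Finset.mul_sum, Finset.sum_const, Finset.card_univ,
        Fintype.card_fin, nsmul_eq_mul]
    have key : (1-α)*n*b - n*ℓ ≤ 2 * (∑ i : Fin n, (M i:ℝ)) := by linarith
    have key2 : (n:ℝ)*((ℓ:ℝ)*(1+ε)) < n*((1-α)*b) := by
      exact mul_lt_mul_of_pos_left hℓb hn0
    have k3 : (1+ε) * ((1-α)*n*b - n*ℓ) ≤ (1+ε) * (2 * (∑ i : Fin n, (M i:ℝ))) :=
      mul_le_mul_of_nonneg_left key (le_of_lt hεp)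
    rw [hμdef, div_mul_eq_mul_div, div_mul_eq_mul_div,
      div_lt_iff₀ (by linarith : (0:ℝ) < 2*(1+ε))]
    nlinarith [key2, k3]
  -- the set of good colors
  set G : Finset (Fin n) := Finset.univ.filter (fun i => μ/2 * (b:ℝ) ≤ (M i : ℝ)) with hGdef
  have hsplitG : ∑ i ∈ G, (M i:ℝ)
      + ∑ i ∈ Finset.univ.filter (fun i : Fin n => ¬ (μ/2 * (b:ℝ) ≤ (M i:ℝ))), (M i:ℝ)
      = ∑ i : Fin n, (M i:ℝ) := by
    rw [hGdef]
    exact Finset.sum_filter_add_sum_filter_not _ _ _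
  have hup1 : ∑ i ∈ G, (M i:ℝ) ≤ (G.card:ℝ) * ((b:ℝ)/2) := by
    calc ∑ i ∈ G, (M i:ℝ) ≤ ∑ _i ∈ G, ((b:ℝ)/2) := Finset.sum_le_sum (fun i _ => hMup i)
      _ = (G.card:ℝ) * ((b:ℝ)/2) := by rw [Finset.sum_const, nsmul_eq_mul]
  have hGn : G.card ≤ n := by
    rw [hGdef]
    exact le_trans (Finset.card_filter_le _ _) (by simp)
  have hcardpred : (Finset.univ.filter (fun i : Fin n => ¬ (μ/2 * (b:ℝ) ≤ (M i:ℝ)))).card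
      = n - G.card := by
    have h := Finset.card_filter_add_card_filter_not
      (s := (Finset.univ : Finset (Fin n))) (p := fun i : Fin n => μ/2 * (b:ℝ) ≤ (M i:ℝ))
    rw [Finset.card_univ, Fintype.card_fin, ← hGdef] at h
    omega
  have hup2 : ∑ i ∈ Finset.univ.filter (fun i : Fin n => ¬ (μ/2 * (b:ℝ) ≤ (M i:ℝ))), (M i:ℝ)
      ≤ ((n:ℝ) - G.card) * (μ/2 * b) := by
    calc ∑ i ∈ Finset.univ.filter (fun i : Fin n => ¬ (μ/2 * (b:ℝ) ≤ (M i:ℝ))), (M i:ℝ)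
        ≤ ∑ _i ∈ Finset.univ.filter (fun i : Fin n => ¬ (μ/2 * (b:ℝ) ≤ (M i:ℝ))), (μ/2 * (b:ℝ)) :=
          Finset.sum_le_sum (fun i hi => ((not_le.mp (Finset.mem_filter.mp hi).2).le))
      _ = ((n:ℝ) - G.card) * (μ/2 * b) := by
          rw [Finset.sum_const, nsmul_eq_mul, hcardpred, Nat.cast_sub hGn]
  have hcomb : μ*n*b < (G.card:ℝ) * ((b:ℝ)/2) + ((n:ℝ) - G.card) * (μ/2 * b) := by
    linarith
  have hfin : (μ*(n:ℝ)) * b < ((G.card:ℝ)/2 + ((n:ℝ) - G.card)*(μ/2)) * b := by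
    calc (μ*(n:ℝ)) * b = μ*n*b := by ring
      _ < (G.card:ℝ) * ((b:ℝ)/2) + ((n:ℝ) - G.card) * (μ/2 * b) := hcomb
      _ = ((G.card:ℝ)/2 + ((n:ℝ) - G.card)*(μ/2)) * b := by ring
  have hθm : μ * n < (1 - μ) * G.card := by
    have h := (mul_lt_mul_iff_of_pos_right hb0).mp hfin
    nlinarith [h]
  have hmG : Cgr * Lam (b:ℝ) ≤ ((G.card : ℕ):ℝ) := by
    have h1 : Lam (b:ℝ) ≤ Lam (B:ℝ) := lam_mono (by exact_mod_cast hA2) (by exact_mod_cast hAB)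
    have h2 : Cgr * Lam (b:ℝ) ≤ Cgr * Lam (B:ℝ) := mul_le_mul_of_nonneg_left h1 hCpos.le
    have h3 : Cgr * Lam (B:ℝ) = (μ/(1-μ)) * (Cgr / (μ/(1-μ)) * Lam (B:ℝ)) := by
      rw [← mul_assoc, mul_comm (μ/(1-μ)) (Cgr/(μ/(1-μ))), div_mul_cancel₀ _ hθ0.ne']
    have h4 : (μ/(1-μ)) * (Cgr/(μ/(1-μ)) * Lam (B:ℝ)) ≤ (μ/(1-μ)) * n :=
      mul_le_mul_of_nonneg_left hn hθ0.le
    have h5 : (μ/(1-μ)) * (n:ℝ) ≤ (G.card:ℝ) := by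
      rw [div_mul_eq_mul_div, div_le_iff₀ (by linarith : (0:ℝ) < 1-μ)]
      linarith
    linarith
  -- build the graph and apply the combinatorial lemma
  have hg1 : ∀ e : EdgeT G S fib,
      (endsF G S fib e).1 ≠ (endsF G S fib e).2 := endsF_ne G S fib
  have hg2 : ∀ e e' : EdgeT G S fib, e ≠ e' → colorF G S fib e = colorF G S fib e' →
      (endsF G S fib e).1 ≠ (endsF G S fib e').1 ∧
      (endsF G S fib e).1 ≠ (endsF G S fib e').2 ∧
      (endsF G S fib e).2 ≠ (endsF G S fib e').1 ∧
      (endsF G S fib e).2 ≠ (endsF G S fib e').2 :=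
    fun e e' hne hc => endsF_disj G S fib hfib_disj hne (colorF_eq G S fib hc)
  have hg3 : ∀ c : Fin G.card,
      μ/2 * (b:ℝ) ≤ (Nat.card {e : EdgeT G S fib // colorF G S fib e = c} : ℝ) := by
    intro c
    have h1 := card_color_ge G S fib c
    have h2 : (G.equivFin.symm c).1 ∈ G := (G.equivFin.symm c).2
    have h3 : μ/2 * (b:ℝ) ≤ (M (G.equivFin.symm c).1 : ℝ) := (Finset.mem_filter.mp h2).2
    have h4 : M (G.equivFin.symm c).1
        ≤ Nat.card {e : EdgeT G S fib // colorF G S fib e = c} := by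
      rw [hMdef]; exact h1
    calc μ/2 * (b:ℝ) ≤ (M (G.equivFin.symm c).1 : ℝ) := h3
      _ ≤ _ := by exact_mod_cast h4
  obtain ⟨W, hW2, F, hFend, hFcard, hFconn, hFdisj⟩ :=
    hCgr b G.card hA2 hmG {x : Fin d → ZMod p // x ∈ A} (EdgeT G S fib)
      (by rw [hbdef]; exact Fintype.card_coe A)
      (endsF G S fib) (colorF G S fib) hg1 hg2 hg3
  -- extract the spanning-tree certificate
  have hwB : W.card ≤ B := by
    have h1 := Finset.card_le_card (Finset.subset_univ W)
    rw [Finset.card_univ, Fintype.card_coe, ← hbdef] at h1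
    omega
  set nn := W.card - 1 with hnndef
  have hw1 : nn + 1 = W.card := by omega
  have hnn1 : 1 ≤ nn := by omega
  have hnnB : nn + 1 ≤ B := by omega
  set eW : {x : {x : Fin d → ZMod p // x ∈ A} // x ∈ W} ≃ Fin (nn+1) :=
    W.equivFin.trans (finCongr hw1.symm) with heW
  set eF : (r : Fin d) → {e : EdgeT G S fib // e ∈ F r} ≃ Fin nn :=
    fun r => (F r).equivFin.trans (finCongr (hFcard r)) with heF
  set vert : Fin (nn+1) → (Fin d → ZMod p) := fun u => ((eW.symm u).1).1 with hvert
  have hvert_eq : ∀ u, vert u = ((eW.symm u).1).1 := fun u => by rw [hvert]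
  set edges : Fin d → Fin nn → Fin (nn+1) × Fin (nn+1) := fun r k =>
    (eW ⟨(endsF G S fib ((eF r).symm k).1).1, (hFend r ((eF r).symm k).1 ((eF r).symm k).2).1⟩,
     eW ⟨(endsF G S fib ((eF r).symm k).1).2, (hFend r ((eF r).symm k).1 ((eF r).symm k).2).2⟩)
    with hedges
  have hedges_eq : ∀ r k, edges r k =
      (eW ⟨(endsF G S fib ((eF r).symm k).1).1, (hFend r ((eF r).symm k).1 ((eF r).symm k).2).1⟩,
       eW ⟨(endsF G S fib ((eF r).symm k).1).2, (hFend r ((eF r).symm k).1 ((eF r).symm k).2).2⟩)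
    := fun r k => by rw [hedges]
  set col : Fin d → Fin nn → Fin n := fun r k => ((((eF r).symm k).1).1).1 with hcol
  have hcol_eq : ∀ r k, col r k = ((((eF r).symm k).1).1).1 := fun r k => by rw [hcol]
  have hedge_spec : ∀ (r : Fin d) (e : EdgeT G S fib) (he : e ∈ F r),
      edges r (eF r ⟨e, he⟩)
        = (eW ⟨(endsF G S fib e).1, (hFend r e he).1⟩,
           eW ⟨(endsF G S fib e).2, (hFend r e he).2⟩) := by
    intro r e he
    rw [hedges_eq]
    simp only [Equiv.symm_apply_apply]
  have hSTne : ∀ r k, (edges r k).1 ≠ (edges r k).2 := by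
    intro r k h
    rw [hedges_eq] at h
    have h2 := eW.injective h
    have h3 := congrArg Subtype.val h2
    exact endsF_ne G S fib ((eF r).symm k).1 h3
  have hSTconn : ∀ r, (SimpleGraph.fromRel
      (fun v u : Fin (nn+1) => ∃ k, edges r k = (v, u))).Connected := by
    intro r
    have key : ∀ x y : {v : {x : Fin d → ZMod p // x ∈ A} // v ∈ W},
        (∃ e ∈ F r, endsF G S fib e = (x.1, y.1)) → ∃ k, edges r k = (eW x, eW y) := by
      rintro x y ⟨e, he, hee⟩
      refine ⟨eF r ⟨e, he⟩, ?_⟩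
      rw [hedge_spec r e he]
      have h1 : (endsF G S fib e).1 = x.1 := by rw [hee]
      have h2 : (endsF G S fib e).2 = y.1 := by rw [hee]
      have hx : (⟨(endsF G S fib e).1, (hFend r e he).1⟩ :
          {v : {x : Fin d → ZMod p // x ∈ A} // v ∈ W}) = x := Subtype.ext h1
      have hy : (⟨(endsF G S fib e).2, (hFend r e he).2⟩ :
          {v : {x : Fin d → ZMod p // x ∈ A} // v ∈ W}) = y := Subtype.ext h2
      rw [hx, hy]
    have hmapadj : ∀ a c : {x : {x : Fin d → ZMod p // x ∈ A} // x ∈ W},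
        (SimpleGraph.fromRel
          (fun v u : {x : {x : Fin d → ZMod p // x ∈ A} // x ∈ W} =>
            ∃ e ∈ F r, endsF G S fib e = (v.1, u.1))).Adj a c →
        (SimpleGraph.fromRel (fun v u : Fin (nn+1) => ∃ k, edges r k = (v, u))).Adj
          (eW a) (eW c) := by
      intro a c hac
      rw [SimpleGraph.fromRel_adj] at hac ⊢
      obtain ⟨hne, hor⟩ := hac
      refine ⟨fun h => hne (eW.injective h), ?_⟩
      rcases hor with h | h
      · exact Or.inl (key a c h)
      · exact Or.inr (key c a h)
    exact SimpleGraph.Connected.map ⟨⇑eW, fun {a c} h => hmapadj a c h⟩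
      (fun z => ⟨eW.symm z, eW.apply_symm_apply z⟩) (hFconn r)
  have hST : ∀ r, IsSpanningTreeList nn (edges r) := fun r => ⟨hSTne r, hSTconn r⟩
  -- color disjointness
  have himg : ∀ r, Finset.univ.image (col r)
      = (F r).image (fun e : EdgeT G S fib => (e.1.1 : Fin n)) := by
    intro r
    ext i
    simp only [Finset.mem_image, Finset.mem_univ, true_and]
    constructor
    · rintro ⟨k, hk⟩
      refine ⟨((eF r).symm k).1, ((eF r).symm k).2, ?_⟩
      rw [hcol_eq] at hk
      exact hk
    · rintro ⟨e, he, hei⟩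
      refine ⟨eF r ⟨e, he⟩, ?_⟩
      rw [hcol_eq, Equiv.symm_apply_apply]
      exact hei
  have hSTdisj : Pairwise fun r r' : Fin d =>
      Disjoint (Finset.univ.image (col r)) (Finset.univ.image (col r')) := by
    intro r r' hrr
    rw [himg r, himg r']
    have hfun : ∀ (rr : Fin d), (F rr).image (fun e : EdgeT G S fib => (e.1.1 : Fin n))
        = ((F rr).image (colorF G S fib)).image
            (fun c => ((G.equivFin.symm c).1 : Fin n)) := by
      intro rr
      rw [Finset.image_image]
      apply Finset.image_congr
      intro e _
      show (e.1.1 : Fin n) = ((G.equivFin.symm (colorF G S fib e)).1 : Fin n)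
      rw [colorF, Equiv.symm_apply_apply]
    rw [hfun r, hfun r']
    refine (Finset.disjoint_image ?_).mpr (hFdisj hrr)
    intro c c' h
    exact G.equivFin.symm.injective (Subtype.ext h)
  have hdet := hgood nn hnn1 hnnB edges col hST hSTdisj
  -- now derive a zero determinant for the contradiction
  have hvert_inj : Function.Injective vert := by
    intro u u' h
    rw [hvert_eq, hvert_eq] at h
    exact eW.symm.injective (Subtype.ext (Subtype.ext h))
  set x : Fin d × Fin nn → ZMod p :=
    fun sj => vert (Fin.castSucc sj.2) sj.1 - vert (Fin.last nn) sj.1 with hx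
  have hx_ne : x ≠ 0 := by
    have hne : vert (Fin.castSucc (⟨0, hnn1⟩ : Fin nn)) ≠ vert (Fin.last nn) := by
      intro h
      have h2 := congrArg Fin.val (hvert_inj h)
      simp at h2
      omega
    obtain ⟨s, hs⟩ := Function.ne_iff.mp hne
    intro h0
    exact hs (sub_eq_zero.mp (by simpa [hx] using congrFun h0 (s, ⟨0, hnn1⟩)))
  have key : ∀ (u : Fin (nn+1)) (s : Fin d),
      ∑ j : Fin nn, (if u = Fin.castSucc j then (1:ZMod p) else 0)
        * (vert (Fin.castSucc j) s - vert (Fin.last nn) s)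
      = vert u s - vert (Fin.last nn) s := by
    intro u s
    have h := aux_row_sum nn u (fun u' => vert u' s - vert (Fin.last nn) s) (by simp)
    simpa using h
  have hlamedge : ∀ r k, lamf (col r k) (vert (edges r k).1)
      = lamf (col r k) (vert (edges r k).2) := by
    intro r k
    have h1 : vert (edges r k).1 = ((endsF G S fib ((eF r).symm k).1).1).1 := by
      simp only [hedges_eq, hvert_eq, Equiv.symm_apply_apply]
    have h2 : vert (edges r k).2 = ((endsF G S fib ((eF r).symm k).1).2).1 := by
      simp only [hedges_eq, hvert_eq, Equiv.symm_apply_apply]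
    have h3 := endsF_mem₁ G S fib ((eF r).symm k).1
    have h4 := endsF_mem₂ G S fib ((eF r).symm k).1
    rw [hfib_mem] at h3 h4
    rw [hcol_eq, h1, h2, h3, h4]
  have hmul : (certMatrix (ZMod p) n d nn edges col coeff).mulVec x = 0 := by
    funext rk
    obtain ⟨r, k⟩ := rk
    show ∑ sj : Fin d × Fin nn,
      certMatrix (ZMod p) n d nn edges col coeff (r,k) sj * x sj = 0
    rw [Fintype.sum_prod_type]
    have hsum1 : ∀ s : Fin d, ∑ j : Fin nn,
        certMatrix (ZMod p) n d nn edges col coeff (r,k) (s,j) * x (s,j)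
        = coeff (col r k) s * ((vert (edges r k).1 s - vert (Fin.last nn) s)
            - (vert (edges r k).2 s - vert (Fin.last nn) s)) := by
      intro s
      calc ∑ j : Fin nn, certMatrix (ZMod p) n d nn edges col coeff (r,k) (s,j) * x (s,j)
          = ∑ j : Fin nn, coeff (col r k) s *
              ((if (edges r k).1 = Fin.castSucc j then (1:ZMod p) else 0)
                  * (vert (Fin.castSucc j) s - vert (Fin.last nn) s)
               - (if (edges r k).2 = Fin.castSucc j then (1:ZMod p) else 0)
                  * (vert (Fin.castSucc j) s - vert (Fin.last nn) s)) := by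
            apply Finset.sum_congr rfl
            intro j _
            show ((if (edges r k).1 = Fin.castSucc j then (1:ZMod p) else 0) -
                  (if (edges r k).2 = Fin.castSucc j then (1:ZMod p) else 0)) *
                  coeff (col r k) s * x (s,j) = _
            rw [hx]
            ring
        _ = coeff (col r k) s * ((vert (edges r k).1 s - vert (Fin.last nn) s)
              - (vert (edges r k).2 s - vert (Fin.last nn) s)) := by
            rw [← Finset.mul_sum, Finset.sum_sub_distrib, key (edges r k).1 s,
              key (edges r k).2 s]
    calc ∑ s : Fin d, ∑ j : Fin nn,
          certMatrix (ZMod p) n d nn edges col coeff (r,k) (s,j) * x (s,j)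
        = ∑ s : Fin d, coeff (col r k) s * ((vert (edges r k).1 s - vert (Fin.last nn) s)
            - (vert (edges r k).2 s - vert (Fin.last nn) s)) :=
          Finset.sum_congr rfl (fun s _ => hsum1 s)
      _ = (∑ s : Fin d, coeff (col r k) s * vert (edges r k).1 s)
            - (∑ s : Fin d, coeff (col r k) s * vert (edges r k).2 s) := by
          rw [← Finset.sum_sub_distrib]
          apply Finset.sum_congr rfl
          intro s _
          ring
      _ = 0 := by
          have h := hlamedge r k
          rw [hlamf] at h
          rw [sub_eq_zero]
          exact h
  have hdet0 : (certMatrix (ZMod p) n d nn edges col coeff).det = 0 :=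
    Matrix.exists_mulVec_eq_zero_iff.mp ⟨x, hx_ne, hmul⟩
  exact hdet hdet0
end

section
/- Let p be a prime, let u₁, …, u_r ∈ 𝔽_p² be pairwise non-parallel nonzero vectors (r ≥ 2), and let t₁, …, t_r be positive integers with each t_j < p. Suppose 2^r · ∏_j t_j · p^{r−2} < (p−1)^r. Then there exist nonzero scalars s₁, …, s_r ∈ 𝔽_p such that all the sums ∑_{j=1}^r a_j·s_j·u_j over 0 ≤ a_j < t_j are pairwise distinct; i.e., the generalized arithmetic box they generate has exactly ∏_j t_j elements. -/
/-!
A scalar tuple `s` fails exactly when some nonzero difference vector `Δ = a - b`, with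
`|Δ_j| < t_j`, solves `∑ Δ_j s_j u_j = 0`. A solution forces `Δ` to have two nonzero
coordinates `j₀ ≠ j₁`, and then, `u_{j₀}` and `u_{j₁}` being linearly independent, the
coordinates `s_{j₀}, s_{j₁}` are determined by the others: at most `p^{r-2}` solutions per
`Δ`. There are at most `2^r ∏ t_j` such `Δ`, so the hypothesis leaves some of the `(p-1)^r`
tuples of nonzero scalars good.
-/

open Finset

section Module

variable {K V ι : Type*} [Field K] [AddCommGroup V] [Module K V] [Fintype ι]

theorem exists_two_ne_zero_of_sum_smul_smul_eq_zero {δ s : ι → K} {u : ι → V}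
    (hs : ∀ j, s j ≠ 0) (hu : ∀ j, u j ≠ 0) (hsum : ∑ j, δ j • s j • u j = 0) (hδ : δ ≠ 0) :
    ∃ j₀ j₁, j₀ ≠ j₁ ∧ δ j₀ ≠ 0 ∧ δ j₁ ≠ 0 := by
  obtain ⟨k, hk⟩ := Function.ne_iff.mp hδ
  by_contra! honly
  have hsingle : ∑ j, δ j • s j • u j = δ k • s k • u k :=
    Fintype.sum_eq_single k fun j hj => by rw [honly k j hj.symm hk, zero_smul]
  exact smul_ne_zero hk (smul_ne_zero (hs k) (hu k)) (hsingle ▸ hsum)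

theorem card_filter_sum_smul_smul_eq_zero_le [Fintype K] [DecidableEq ι] [DecidableEq V]
    {δ : ι → K} {u : ι → V} {j₀ j₁ : ι} (hne : j₀ ≠ j₁) (h₀ : δ j₀ ≠ 0) (h₁ : δ j₁ ≠ 0)
    (hli : LinearIndependent K ![u j₀, u j₁]) :
    #{s : ι → K | ∑ j, δ j • s j • u j = 0} ≤ Fintype.card K ^ (Fintype.card ι - 2) := by
  set rest : Finset ι := {j₀, j₁}ᶜ
  set sols : Finset (ι → K) := {s | ∑ j, δ j • s j • u j = 0}
  have hinj : Set.InjOn (fun s : ι → K => fun j : rest => s j) sols := by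
    intro s hs s' hs' hrest
    simp only [sols, coe_filter, mem_univ, true_and, Set.mem_ofPred_eq] at hs hs'
    have hoff : ∀ j, j ≠ j₀ ∧ j ≠ j₁ → s j = s' j := fun j hj =>
      congrFun hrest ⟨j, by simpa [rest] using hj⟩
    have hdiff : (δ j₀ * (s j₀ - s' j₀)) • u j₀ + (δ j₁ * (s j₁ - s' j₁)) • u j₁ = 0 := by
      rw [← Fintype.sum_eq_add (f := fun j => (δ j * (s j - s' j)) • u j) j₀ j₁ hne
        fun j hj => by rw [hoff j hj, sub_self, mul_zero, zero_smul]]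
      simp only [mul_sub, sub_smul, mul_smul, sum_sub_distrib, hs, hs', sub_self]
    obtain ⟨e₀, e₁⟩ := LinearIndependent.pair_iff.mp hli _ _ hdiff
    funext j
    by_cases hj₀ : j = j₀
    · subst hj₀; simpa [h₀, sub_eq_zero] using e₀
    by_cases hj₁ : j = j₁
    · subst hj₁; simpa [h₁, sub_eq_zero] using e₁
    exact hoff j ⟨hj₀, hj₁⟩
  calc #sols ≤ #(univ : Finset (rest → K)) :=
        card_le_card_of_injOn _ (fun _ _ => mem_coe.mpr (mem_univ _)) hinj
    _ = Fintype.card K ^ (Fintype.card ι - 2) := by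
        rw [card_univ, Fintype.card_fun, Fintype.card_coe, card_compl, card_pair hne]

end Module

theorem card_piFinset_Ioo_neg_le {ι : Type*} [Fintype ι] [DecidableEq ι] (t : ι → ℕ) :
    #(Fintype.piFinset fun j => Ioo (-(t j : ℤ)) (t j)) ≤ 2 ^ Fintype.card ι * ∏ j, t j := by
  rw [Fintype.card_piFinset, ← card_univ, ← prod_const, ← prod_mul_distrib]
  exact prod_le_prod' fun j _ => by rw [Int.card_Ioo]; omega

section Box

variable {ι V : Type*} [Fintype ι] [DecidableEq ι] [AddCommGroup V] [DecidableEq V]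
variable (p : ℕ) (u : ι → V) (t : ι → ℕ)

noncomputable def boxDiffs : Finset (ι → ℤ) :=
  {Δ ∈ Fintype.piFinset fun j => Ioo (-(t j : ℤ)) (t j) |
    ∃ j₀ j₁, j₀ ≠ j₁ ∧ (Δ j₀ : ZMod p) ≠ 0 ∧ (Δ j₁ : ZMod p) ≠ 0}

variable [Module (ZMod p) V]

noncomputable def badScalars [NeZero p] : Finset (ι → ZMod p) :=
  (boxDiffs p t).biUnion fun Δ => {s | ∑ j, (Δ j : ZMod p) • s j • u j = 0}

variable {p u t} [Fact p.Prime]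

theorem card_badScalars_le
    (hli : ∀ j j', j ≠ j' → LinearIndependent (ZMod p) ![u j, u j']) :
    #(badScalars p u t) ≤ 2 ^ Fintype.card ι * (∏ j, t j) * p ^ (Fintype.card ι - 2) := by
  refine (card_biUnion_le_card_mul _ _ _ fun Δ hΔ => ?_).trans
    (Nat.mul_le_mul_right _ ((card_filter_le _ _).trans (card_piFinset_Ioo_neg_le t)))
  obtain ⟨-, j₀, j₁, hne, h₀, h₁⟩ := mem_filter.mp hΔ
  simpa using card_filter_sum_smul_smul_eq_zero_le hne h₀ h₁ (hli j₀ j₁ hne)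

theorem eq_of_sum_smul_eq_of_notMem_badScalars {s : ι → ZMod p} (hs : ∀ j, s j ≠ 0)
    (hu : ∀ j, u j ≠ 0) (htp : ∀ j, t j ≤ p) (hgood : s ∉ badScalars p u t)
    {a b : ι → ℕ} (ha : ∀ j, a j < t j) (hb : ∀ j, b j < t j)
    (hab : ∑ j, (a j : ZMod p) • s j • u j = ∑ j, (b j : ZMod p) • s j • u j) : a = b := by
  by_contra hne
  let Δ : ι → ℤ := fun j => a j - b j
  have hcast_ne : (fun j => (Δ j : ZMod p)) ≠ 0 := by
    obtain ⟨k, hk⟩ := Function.ne_iff.mp hne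
    refine Function.ne_iff.mpr ⟨k, fun h => hk ?_⟩
    have hk' : (a k : ZMod p) = b k := by simpa [Δ, sub_eq_zero] using h
    rwa [ZMod.natCast_eq_natCast_iff', Nat.mod_eq_of_lt ((ha k).trans_le (htp k)),
      Nat.mod_eq_of_lt ((hb k).trans_le (htp k))] at hk'
  have hsum : ∑ j, (Δ j : ZMod p) • s j • u j = 0 := by
    simp only [Δ, Int.cast_sub, Int.cast_natCast, sub_smul, sum_sub_distrib, hab, sub_self]
  have hΔ : Δ ∈ Fintype.piFinset fun j => Ioo (-(t j : ℤ)) (t j) :=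
    Fintype.mem_piFinset.mpr fun j => mem_Ioo.mpr <| by
      simp only [Δ]
      have := ha j
      have := hb j
      omega
  exact hgood (mem_biUnion.mpr ⟨Δ, mem_filter.mpr
    ⟨hΔ, exists_two_ne_zero_of_sum_smul_smul_eq_zero hs hu hsum hcast_ne⟩, by simpa using hsum⟩)

end Box

theorem stmt_17_general (p : ℕ) (hp : p.Prime) (r : ℕ)
    (u : Fin r → Fin 2 → ZMod p)
    (hu0 : ∀ j, u j ≠ 0)
    (hupar : ∀ j j', j ≠ j' → ∀ c : ZMod p, u j ≠ c • u j')
    (t : Fin r → ℕ) (htp : ∀ j, t j < p)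
    (hcount : (2 : ℝ) ^ r * (∏ j, (t j : ℝ)) * (p : ℝ) ^ (r - 2) <
      ((p : ℝ) - 1) ^ r) :
    ∃ s : Fin r → ZMod p, (∀ j, s j ≠ 0) ∧
      ∀ a b : Fin r → ℕ, (∀ j, a j < t j) → (∀ j, b j < t j) →
        (∑ j, (a j : ZMod p) • (s j • u j)) = (∑ j, (b j : ZMod p) • (s j • u j)) →
        a = b := by
  have : Fact p.Prime := ⟨hp⟩
  have hbad : #(badScalars p u t) <
      #(Fintype.piFinset fun _ : Fin r => ({0}ᶜ : Finset (ZMod p))) := by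
    have hle := card_badScalars_le (u := u) (t := t) fun j j' hne =>
      linearIndependent_fin2.mpr ⟨hu0 j', fun c => (hupar j j' hne c).symm⟩
    have hcount' : 2 ^ r * (∏ j, t j) * p ^ (r - 2) < (p - 1) ^ r := by
      have : ((2 ^ r * (∏ j, t j) * p ^ (r - 2) : ℕ) : ℝ) < ((p - 1) ^ r : ℕ) := by
        push_cast [Nat.cast_sub hp.one_le]
        exact hcount
      exact_mod_cast this
    rw [Fintype.card_fin] at hle
    simpa [card_compl] using hle.trans_lt hcount'
  obtain ⟨s, hs, hgood⟩ := exists_mem_notMem_of_card_lt_card hbad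
  have hs0 : ∀ j, s j ≠ 0 := by simpa using hs
  exact ⟨s, hs0, fun a b ha hb => eq_of_sum_smul_eq_of_notMem_badScalars hs0 hu0
    (fun j => (htp j).le) hgood ha hb⟩

/-- Generalized arithmetic box in `𝔽_p²`: given pairwise non-parallel nonzero vectors
`u₁, …, u_r` (`r ≥ 2`) and side lengths `t_j < p` with
`2^r · ∏_j t_j · p^{r-2} < (p-1)^r`, there are nonzero scalars `s_j` so that all the
sums `∑_j a_j s_j u_j` with `0 ≤ a_j < t_j` are pairwise distinct. -/
theorem stmt_17 (p : ℕ) (hp : p.Prime) (r : ℕ) (hr : 2 ≤ r)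
    (u : Fin r → Fin 2 → ZMod p)
    (hu0 : ∀ j, u j ≠ 0)
    (hupar : ∀ j j', j ≠ j' → ∀ c : ZMod p, u j ≠ c • u j')
    (t : Fin r → ℕ) (ht1 : ∀ j, 1 ≤ t j) (htp : ∀ j, t j < p)
    (hcount : (2 : ℝ) ^ r * (∏ j, (t j : ℝ)) * (p : ℝ) ^ (r - 2) <
      ((p : ℝ) - 1) ^ r) :
    ∃ s : Fin r → ZMod p, (∀ j, s j ≠ 0) ∧
      ∀ a b : Fin r → ℕ, (∀ j, a j < t j) → (∀ j, b j < t j) →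
        (∑ j, (a j : ZMod p) • (s j • u j)) = (∑ j, (b j : ZMod p) • (s j • u j)) →
        a = b :=
  stmt_17_general p hp r u hu0 hupar t htp hcount
end

section
/- For all α, ε ∈ (0,1) there exist δ > 0, n₀ ∈ ℤ⁺, and a computable f : ℤ⁺ → ℤ⁺ such that: for every n ≥ n₀, every prime p ≥ f(n), every linear code C ⊆ 𝔽_p^n of dimension at least 2, and every integer ℓ with 2^{δn} ≤ ℓ ≤ p, the code C is not (α, ℓ, ((1+ε)/(1−α))·ℓ)-list recoverable. -/
/-- A code `C ⊆ 𝔽_p^n` is `(α, ℓ, L)`-list recoverable if for all lists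
`S₁, …, S_n ⊆ 𝔽_p` of size `ℓ`, at most `L` codewords `x ∈ C` satisfy
`|{i : x_i ∉ S_i}| ≤ α n`. -/
def ListRecoverable {p n : ℕ} (C : Set (Fin n → ZMod p)) (α : ℝ) (ℓ : ℕ) (L : ℝ) : Prop :=
  ∀ S : Fin n → Finset (ZMod p), (∀ i, (S i).card = ℓ) →
    (Nat.card {x : Fin n → ZMod p // x ∈ C ∧
      (Nat.card {i : Fin n // x i ∉ S i} : ℝ) ≤ α * (n : ℝ)} : ℝ) ≤ L

open Polynomial Finset

lemma aux_fixed {p : ℕ} [hp : Fact p.Prime] (z : GaloisField p 2) (hz : z ^ p = z) :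
    ∃ a : ZMod p, algebraMap (ZMod p) (GaloisField p 2) a = z := by
  classical
  by_contra hcon
  push_neg at hcon
  haveI : NeZero p := ⟨hp.out.ne_zero⟩
  set P : Polynomial (GaloisField p 2) := X ^ p - X with hPdef
  have hdeg : P.natDegree = p := by
    rw [hPdef, natDegree_sub_eq_left_of_natDegree_lt, natDegree_X_pow]
    rw [natDegree_X_pow]
    exact lt_of_le_of_lt natDegree_X_le hp.out.one_lt
  set R : Finset (GaloisField p 2) :=
    insert z ((univ : Finset (ZMod p)).image (algebraMap (ZMod p) (GaloisField p 2))) with hR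
  have hroot : ∀ w ∈ R, w ∈ P.roots := by
    intro w hw
    have hPne : P ≠ 0 := by
      intro h0
      rw [h0, natDegree_zero] at hdeg
      exact hp.out.ne_zero hdeg.symm
    rw [mem_roots hPne]
    rcases Finset.mem_insert.mp hw with h | h
    · subst h
      simp [hPdef, IsRoot, hz]
    · obtain ⟨a, -, rfl⟩ := Finset.mem_image.mp h
      simp only [hPdef, IsRoot, eval_sub, eval_pow, eval_X]
      rw [← map_pow, ZMod.pow_card, sub_self]
  have hcard : R.card = p + 1 := by
    rw [hR, Finset.card_insert_of_notMem, Finset.card_image_of_injective _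
      (algebraMap (ZMod p) (GaloisField p 2)).injective, Finset.card_univ, ZMod.card]
    · intro hmem
      obtain ⟨a, -, ha⟩ := Finset.mem_image.mp hmem
      exact hcon a ha
  have := card_le_degree_of_subset_roots (p := P) (Z := R) (fun w hw => hroot w (by simpa using hw))
  omega

lemma aux_notmem {α : Type*} [Fintype α] (s : Finset α) (h : s.card < Fintype.card α) :
    ∃ x, x ∉ s := by
  by_contra hcon
  push_neg at hcon
  have : (univ : Finset α) ⊆ s := fun x _ => hcon x
  have := Finset.card_le_card this
  rw [Finset.card_univ] at this
  omega

lemma exists_omega {p : ℕ} [hp : Fact p.Prime] (n : ℕ) (hn : 0 < n) (hnp : n < p)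
    (κ : Fin n → GaloisField p 2) :
    ∃ ω : GaloisField p 2, (ω ≠ 0) ∧
      ∀ (a : ZMod p) (i : Fin n), ω ≠ algebraMap (ZMod p) (GaloisField p 2) a * κ i := by
  classical
  haveI : NeZero p := ⟨hp.out.ne_zero⟩
  haveI : Fintype (GaloisField p 2) := Fintype.ofFinite _
  set bad : Finset (GaloisField p 2) :=
    (univ : Finset (ZMod p × Fin n)).image
      (fun q => algebraMap (ZMod p) (GaloisField p 2) q.1 * κ q.2) with hbad
  have hcardF : Fintype.card (GaloisField p 2) = p ^ 2 := by
    rw [← Nat.card_eq_fintype_card, GaloisField.card p 2 (by norm_num)]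
  have hcard : bad.card < Fintype.card (GaloisField p 2) := by
    calc bad.card ≤ (univ : Finset (ZMod p × Fin n)).card := Finset.card_image_le
    _ = p * n := by simp [Finset.card_univ, ZMod.card]
    _ < p * p := by
        have h0 := hp.out.pos
        exact Nat.mul_lt_mul_of_le_of_lt (le_refl p) hnp h0
    _ ≤ Fintype.card (GaloisField p 2) := by rw [hcardF]; ring_nf; omega
  obtain ⟨ω, hω⟩ := aux_notmem bad hcard
  refine ⟨ω, ?_, ?_⟩
  · rintro rfl
    exact hω (Finset.mem_image.mpr ⟨(0, ⟨0, hn⟩), mem_univ _, by simp⟩)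
  · intro a i heq
    exact hω (Finset.mem_image.mpr ⟨(a, i), mem_univ _, heq.symm⟩)

lemma exists_nu {p : ℕ} [hp : Fact p.Prime] (n T : ℕ) (hT : 2 ≤ T)
    (hpbig : (2*T)^(n+1)*(n+1) < p)
    (e : Fin n → GaloisField p 2) (he : ∀ j, e j ≠ 0) :
    ∃ ν : ZMod p, ν ≠ 0 ∧ ∀ δ : Fin n → ℤ, (∀ j, |δ j| < (T:ℤ)) → (∃ j₀, δ j₀ ≠ 0) →
      ∑ j : Fin n, (((δ j : ZMod p)) * ν ^ (j.1+1)) • e j ≠ 0 := by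
  classical
  haveI : NeZero p := ⟨hp.out.ne_zero⟩
  set am := algebraMap (ZMod p) (GaloisField p 2) with ham
  -- the polynomial associated to an integer vector δ
  set Q : (Fin n → ℤ) → Polynomial (GaloisField p 2) :=
    fun δ => ∑ j : Fin n, C (am ((δ j : ZMod p)) * e j) * X ^ (j.1+1) with hQ
  have hQdeg : ∀ δ, (Q δ).natDegree ≤ n := by
    intro δ
    apply natDegree_sum_le_of_forall_le
    intro j _
    exact (natDegree_C_mul_X_pow_le _ _).trans (by omega)
  -- bad set of values in the big field
  set dec : (Fin n → Fin (2*T)) → (Fin n → ℤ) := fun dd j => (dd j : ℤ) - T with hdec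
  set badF : Finset (GaloisField p 2) :=
    (univ : Finset (Fin n → Fin (2*T))).biUnion (fun dd => (Q (dec dd)).roots.toFinset) with hbadF
  have hbadFcard : badF.card ≤ (2*T)^n * n := by
    calc badF.card ≤ ∑ dd : Fin n → Fin (2*T), ((Q (dec dd)).roots.toFinset).card :=
          Finset.card_biUnion_le
    _ ≤ ∑ _dd : Fin n → Fin (2*T), n := by
        apply Finset.sum_le_sum
        intro dd _
        exact (Multiset.toFinset_card_le _).trans ((Polynomial.card_roots' _).trans (hQdeg _))
    _ = (2*T)^n * n := by
        simp [Finset.sum_const, Finset.card_univ]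
  -- pull back to ZMod p
  set badZ : Finset (ZMod p) := insert 0 ((univ : Finset (ZMod p)).filter (fun a => am a ∈ badF))
    with hbadZ
  have hbadZcard : badZ.card < Fintype.card (ZMod p) := by
    have h1 : ((univ : Finset (ZMod p)).filter (fun a => am a ∈ badF)).card ≤ badF.card := by
      apply Finset.card_le_card_of_injOn am
      · intro a ha
        exact (Finset.mem_filter.mp ha).2
      · intro a _ b _ hab
        exact (RingHom.injective am) hab
    have h2 : badZ.card ≤ badF.card + 1 := by
      calc badZ.card ≤ _ + 1 := Finset.card_insert_le _ _
      _ ≤ badF.card + 1 := by omega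
    have h3 : (2*T)^n * n + 1 < p := by
      have : (2*T)^n * n + 1 ≤ (2*T)^(n+1) * (n+1) := by
        have h4 : (2*T)^n * n ≤ (2*T)^(n+1) * n := by
          apply Nat.mul_le_mul_right
          exact Nat.pow_le_pow_right (by omega) (by omega)
        have h5 : 1 ≤ (2*T)^(n+1) := Nat.one_le_pow _ _ (by omega)
        calc (2*T)^n * n + 1 ≤ (2*T)^(n+1) * n + (2*T)^(n+1) := by omega
        _ = (2*T)^(n+1) * (n+1) := by ring
      omega
    rw [ZMod.card]
    omega
  obtain ⟨ν, hν⟩ := aux_notmem badZ hbadZcard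
  have hν0 : ν ≠ 0 := fun h => hν (by rw [h, hbadZ]; exact Finset.mem_insert_self _ _)
  refine ⟨ν, hν0, ?_⟩
  intro δ hbound ⟨j₀, hj₀⟩ hsum
  -- the polynomial Q δ is nonzero
  have hTp : (T:ℤ) < p := by
    have : T < (2*T)^(n+1)*(n+1) := by
      have h5 : 2*T ≤ (2*T)^(n+1) := Nat.le_self_pow (by omega) _
      have : (2*T)^(n+1) ≤ (2*T)^(n+1)*(n+1) := Nat.le_mul_of_pos_right _ (by omega)
      omega
    exact_mod_cast by omega
  have hδcast : ((δ j₀ : ZMod p)) ≠ 0 := by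
    intro h0
    rw [ZMod.intCast_zmod_eq_zero_iff_dvd] at h0
    have := Int.le_of_dvd (abs_pos.mpr hj₀) ((dvd_abs _ _).mpr h0)
    have hb := hbound j₀
    omega
  have hQne : Q δ ≠ 0 := by
    intro h0
    have hco : (Q δ).coeff (j₀.1+1) = am ((δ j₀ : ZMod p)) * e j₀ := by
      rw [hQ]
      rw [finset_sum_coeff]
      rw [Finset.sum_eq_single j₀]
      · rw [coeff_C_mul, coeff_X_pow, if_pos rfl, mul_one]
      · intro j _ hj
        rw [coeff_C_mul, coeff_X_pow, if_neg, mul_zero]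
        intro hh
        exact hj (Fin.ext (by omega))
      · intro h; exact absurd (Finset.mem_univ _) h
    rw [h0, coeff_zero] at hco
    have : am ((δ j₀ : ZMod p)) * e j₀ ≠ 0 :=
      mul_ne_zero (fun h => hδcast ((RingHom.injective am) (by rw [h, map_zero]))) (he j₀)
    exact this hco.symm
  -- ν is a root
  have hroot : am ν ∈ (Q δ).roots := by
    rw [mem_roots hQne]
    rw [hQ, IsRoot, eval_finset_sum]
    rw [← hsum]
    apply Finset.sum_congr rfl
    intro j _
    rw [eval_mul, eval_C, eval_pow, eval_X, Algebra.smul_def, map_mul, map_pow]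
    ring
  -- hence ν ∈ badZ, contradiction
  apply hν
  rw [hbadZ]
  apply Finset.mem_insert_of_mem
  rw [Finset.mem_filter]
  refine ⟨Finset.mem_univ _, ?_⟩
  rw [hbadF]
  rw [Finset.mem_biUnion]
  refine ⟨fun j => ⟨(δ j + T).toNat, ?_⟩, Finset.mem_univ _, ?_⟩
  · have hb := abs_lt.mp (hbound j)
    omega
  · rw [Multiset.mem_toFinset]
    convert hroot using 3
    funext j
    rw [hdec]
    simp only []
    have hb := abs_lt.mp (hbound j)
    omega

set_option maxHeartbeats 1000000 in
lemma construction {p : ℕ} [hp : Fact p.Prime] {n T ℓ : ℕ} (hn : 1 ≤ n) (hT : 2 ≤ T)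
    (hpbig : (2*T)^(n+1)*(n+1) < p)
    (hTn : T^n ≤ ℓ) (hℓp : ℓ ≤ p) (α : ℝ) (hα : 0 ≤ α)
    (C : Submodule (ZMod p) (Fin n → ZMod p))
    (u v : Fin n → ZMod p) (hu : u ∈ C) (hv : v ∈ C)
    (hUV : ∀ a b : ZMod p, a • u + b • v = 0 → a = 0 ∧ b = 0) :
    ∃ S : Fin n → Finset (ZMod p), (∀ i, (S i).card = ℓ) ∧
      ((ℓ / T^(n-1)) * T^n ≤ Nat.card {x : Fin n → ZMod p // x ∈ (C : Set (Fin n → ZMod p)) ∧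
        (Nat.card {i : Fin n // x i ∉ S i} : ℝ) ≤ α * (n : ℝ)}) := by
  classical
  haveI : NeZero p := ⟨hp.out.ne_zero⟩
  have hT0 : 0 < T := by omega
  -- basis of the quadratic extension
  let BF : Module.Basis (Fin 2) (ZMod p) (GaloisField p 2) :=
    Module.finBasisOfFinrankEq (ZMod p) (GaloisField p 2) (GaloisField.finrank p (by norm_num))
  -- coordinate functionals
  let phi : Fin n → (GaloisField p 2 →ₗ[ZMod p] ZMod p) :=
    fun i => u i • BF.coord 0 + v i • BF.coord 1
  have hphi : ∀ i z, phi i z = u i * (BF.repr z 0) + v i * (BF.repr z 1) := by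
    intro i z
    simp [phi, Module.Basis.coord_apply, smul_eq_mul]
  -- kernel vectors
  let κ : Fin n → GaloisField p 2 := fun i =>
    if u i = 0 ∧ v i = 0 then BF 0 else v i • BF 0 - u i • BF 1
  have hκker : ∀ i, phi i (κ i) = 0 := by
    intro i
    by_cases h : u i = 0 ∧ v i = 0
    · simp [κ, h, hphi, Module.Basis.repr_self, Finsupp.single_apply, h.1, h.2]
    · simp only [κ, if_neg h, hphi, map_sub, map_smul, Finsupp.sub_apply, Finsupp.smul_apply,
        Module.Basis.repr_self, Finsupp.single_apply, smul_eq_mul]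
      norm_num
      ring
  have hκ0 : ∀ i, κ i ≠ 0 := by
    intro i h0
    by_cases h : u i = 0 ∧ v i = 0
    · exact (BF.ne_zero 0) (by simpa [κ, h] using h0)
    · have h00 := congrArg (fun w => BF.repr w 0) h0
      have h11 := congrArg (fun w => BF.repr w 1) h0
      simp only [κ, if_neg h, map_sub, map_smul, Finsupp.sub_apply, Finsupp.smul_apply,
        Module.Basis.repr_self, Finsupp.single_apply, smul_eq_mul, map_zero, Finsupp.coe_zero,
        Pi.zero_apply] at h00 h11
      norm_num at h00 h11
      exact h ⟨h11, h00⟩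
  -- Frobenius
  let σ : GaloisField p 2 →+* GaloisField p 2 := frobenius _ p
  have hσalg : ∀ a : ZMod p,
      σ (algebraMap (ZMod p) (GaloisField p 2) a) = algebraMap (ZMod p) (GaloisField p 2) a := by
    intro a
    rw [frobenius_def, ← map_pow, ZMod.pow_card]
  have hσsmul : ∀ (a : ZMod p) (x : GaloisField p 2), σ (a • x) = a • σ x := by
    intro a x
    rw [Algebra.smul_def, map_mul, hσalg, ← Algebra.smul_def]
  -- choose ω
  have hnp : n < p := by
    have h1 : n < 2^(n+1) := by
      have := @Nat.lt_two_pow_self n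
      have h2 : (2:ℕ)^n ≤ 2^(n+1) := Nat.pow_le_pow_right (by omega) (by omega)
      omega
    have h2 : (2:ℕ)^(n+1) ≤ (2*T)^(n+1) := Nat.pow_le_pow_left (by omega) _
    have h3 : (2*T)^(n+1) ≤ (2*T)^(n+1)*(n+1) := Nat.le_mul_of_pos_right _ (by omega)
    omega
  obtain ⟨ω, hω0, hω⟩ := exists_omega n (by omega) hnp κ
  -- e and ν
  let e : Fin n → GaloisField p 2 := fun j => κ j * σ ω - σ (κ j) * ω
  have he : ∀ j, e j ≠ 0 := by
    intro j heq
    rw [sub_eq_zero] at heq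
    have hκσ : σ (κ j) ≠ 0 := fun h =>
      hκ0 j ((map_eq_zero_iff σ (RingHom.injective σ)).mp h)
    have hρfix : (ω * (κ j)⁻¹) ^ p = ω * (κ j)⁻¹ := by
      have h1 : (ω * (κ j)⁻¹) ^ p = σ (ω * (κ j)⁻¹) := by rw [frobenius_def]
      rw [h1, map_mul, map_inv₀, inv_eq_one_div, inv_eq_one_div, mul_one_div, mul_one_div,
        div_eq_div_iff hκσ (hκ0 j)]
      rw [mul_comm (κ j) (σ ω)] at heq
      rw [heq]
      ring
    obtain ⟨a, ha⟩ := aux_fixed (ω * (κ j)⁻¹) hρfix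
    apply hω a j
    rw [ha, mul_assoc, inv_mul_cancel₀ (hκ0 j), mul_one]
  obtain ⟨ν, hν0, hνgood⟩ := exists_nu n T hT hpbig e he
  -- parameters
  set s := ℓ / T^(n-1) with hs
  have hTn1pos : 0 < T^(n-1) := Nat.pow_pos hT0
  have hsT : s * T^(n-1) ≤ ℓ := Nat.div_mul_le_self _ _
  have hs1 : 1 ≤ s := by
    rw [hs]
    rw [Nat.one_le_div_iff hTn1pos]
    exact le_trans (Nat.pow_le_pow_right (by omega) (by omega)) hTn
  have hsp : s ≤ p := le_trans (le_trans (Nat.div_le_self _ _) hℓp) (le_refl p)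
  -- the construction
  let zfun : Fin s → (Fin n → Fin T) → GaloisField p 2 := fun k t =>
    (((k:ℕ) : ZMod p) * ν^(n+1)) • ω + ∑ j : Fin n, (((t j : ℕ) : ZMod p) * ν^(j.1+1)) • κ j
  have hzsub : ∀ (k k' : Fin s) (t t' : Fin n → Fin T), zfun k t - zfun k' t' =
      ((((k:ℕ):ZMod p) - ((k':ℕ):ZMod p)) * ν^(n+1)) • ω +
      ∑ j : Fin n, ((((t j:ℕ):ZMod p) - ((t' j:ℕ):ZMod p)) * ν^(j.1+1)) • κ j := by
    intro k k' t t'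
    show _ - _ = _
    rw [add_sub_add_comm, ← Finset.sum_sub_distrib]
    congr 1
    · rw [← sub_smul, ← sub_mul]
    · refine Finset.sum_congr rfl (fun j _ => ?_)
      rw [← sub_smul, ← sub_mul]
  -- injectivity of the point family
  have hzinj : Function.Injective (fun q : Fin s × (Fin n → Fin T) => zfun q.1 q.2) := by
    rintro ⟨k, t⟩ ⟨k', t'⟩ h
    simp only at h
    have hdiff : ((((k:ℕ):ZMod p) - ((k':ℕ):ZMod p)) * ν^(n+1)) • ω +
        ∑ j : Fin n, ((((t j:ℕ):ZMod p) - ((t' j:ℕ):ZMod p)) * ν^(j.1+1)) • κ j = 0 := by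
      rw [← hzsub k k' t t', h, sub_self]
    by_cases hts : t = t'
    · subst hts
      have hsum0 : ∑ j : Fin n, ((((t j:ℕ):ZMod p) - ((t j:ℕ):ZMod p)) * ν^(j.1+1)) • κ j
          = (0 : GaloisField p 2) := by
        apply Finset.sum_eq_zero
        intro j _
        rw [sub_self, zero_mul, zero_smul]
      rw [hsum0, add_zero] at hdiff
      rcases smul_eq_zero.mp hdiff with h1 | h1
      · rcases mul_eq_zero.mp h1 with h2 | h2
        · have hcast : ((k:ℕ):ZMod p) = ((k':ℕ):ZMod p) := sub_eq_zero.mp h2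
          have hmod := (ZMod.natCast_eq_natCast_iff' _ _ _).mp hcast
          have hkp : (k:ℕ) < p := lt_of_lt_of_le k.2 hsp
          have hk'p : (k':ℕ) < p := lt_of_lt_of_le k'.2 hsp
          rw [Nat.mod_eq_of_lt hkp, Nat.mod_eq_of_lt hk'p] at hmod
          exact Prod.ext (Fin.ext hmod) rfl
        · exact absurd h2 (pow_ne_zero _ hν0)
      · exact absurd h1 hω0
    · exfalso
      obtain ⟨j₀, hj₀⟩ := Function.ne_iff.mp hts
      -- apply frobenius
      have hdiffσ : ((((k:ℕ):ZMod p) - ((k':ℕ):ZMod p)) * ν^(n+1)) • σ ω +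
          ∑ j : Fin n, ((((t j:ℕ):ZMod p) - ((t' j:ℕ):ZMod p)) * ν^(j.1+1)) • σ (κ j) = 0 := by
        have hh := congrArg σ hdiff
        rw [map_add, map_zero, map_sum] at hh
        rw [hσsmul] at hh
        convert hh using 2
        apply Finset.sum_congr rfl
        intro j _
        rw [hσsmul]
      -- eliminate the ω-term
      set c : ZMod p := (((k:ℕ):ZMod p) - ((k':ℕ):ZMod p)) * ν^(n+1) with hc
      set d : Fin n → ZMod p := fun j => (((t j:ℕ):ZMod p) - ((t' j:ℕ):ZMod p)) * ν^(j.1+1) with hd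
      have hA : ∑ j : Fin n, d j • κ j = -(c • ω) := by
        rw [eq_neg_iff_add_eq_zero, add_comm]
        exact hdiff
      have hB : ∑ j : Fin n, d j • σ (κ j) = -(c • σ ω) := by
        rw [eq_neg_iff_add_eq_zero, add_comm]
        exact hdiffσ
      have hcomb : ∑ j : Fin n, d j • e j = 0 := by
        have h1 : ∑ j : Fin n, d j • e j =
            (∑ j : Fin n, d j • κ j) * σ ω - (∑ j : Fin n, d j • σ (κ j)) * ω := by
          rw [Finset.sum_mul, Finset.sum_mul, ← Finset.sum_sub_distrib]
          apply Finset.sum_congr rfl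
          intro j _
          show d j • (κ j * σ ω - σ (κ j) * ω) = _
          rw [smul_sub, smul_mul_assoc, smul_mul_assoc]
        rw [h1, hA, hB]
        rw [neg_mul, neg_mul, smul_mul_assoc, smul_mul_assoc, mul_comm ω (σ ω)]
        ring
      -- contradiction with the choice of ν
      apply hνgood (fun j => ((t j : ℕ) : ℤ) - ((t' j : ℕ) : ℤ)) ?_ ?_ ?_
      · intro j
        have h1 := (t j).2
        have h2 := (t' j).2
        rw [abs_lt]
        omega
      · refine ⟨j₀, ?_⟩
        have : (t j₀ : ℕ) ≠ (t' j₀ : ℕ) := fun hh => hj₀ (Fin.ext hh)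
        omega
      · rw [← hcomb]
        apply Finset.sum_congr rfl
        intro j _
        congr 2
        push_cast
        ring
  -- the codeword map
  let ψ : GaloisField p 2 → (Fin n → ZMod p) := fun z i => phi i z
  have hψmem : ∀ z, ψ z ∈ C := by
    intro z
    have hrw : ψ z = (BF.repr z 0) • u + (BF.repr z 1) • v := by
      funext i
      simp only [ψ, hphi, Pi.add_apply, Pi.smul_apply, smul_eq_mul]
      ring
    rw [hrw]
    exact C.add_mem (C.smul_mem _ hu) (C.smul_mem _ hv)
  have hψinj : Function.Injective ψ := by
    intro z z' hzz
    have h2 : (BF.repr z 0 - BF.repr z' 0) • u + (BF.repr z 1 - BF.repr z' 1) • v = 0 := by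
      funext i
      have h1 := congrFun hzz i
      simp only [ψ, hphi] at h1
      simp only [Pi.add_apply, Pi.smul_apply, Pi.zero_apply, smul_eq_mul]
      linear_combination h1
    obtain ⟨ha, hb⟩ := hUV _ _ h2
    apply BF.repr.injective
    ext i
    fin_cases i
    · exact sub_eq_zero.mp ha
    · exact sub_eq_zero.mp hb
  -- values only depend on the digits away from i
  have hker2 : ∀ (k : Fin s) (t t' : Fin n → Fin T) (i : Fin n), (∀ j, j ≠ i → t j = t' j) →
      phi i (zfun k t) = phi i (zfun k t') := by
    intro k t t' i hagree
    have hsub2 : zfun k t - zfun k t' =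
        ((((t i:ℕ):ZMod p) - ((t' i:ℕ):ZMod p)) * ν^(i.1+1)) • κ i := by
      rw [hzsub, sub_self, zero_mul, zero_smul, zero_add]
      rw [Finset.sum_eq_single i]
      · intro j _ hj
        rw [hagree j hj, sub_self, zero_mul, zero_smul]
      · intro hmem
        exact absurd (Finset.mem_univ _) hmem
    have h3 : phi i (zfun k t) - phi i (zfun k t') = 0 := by
      rw [← map_sub, hsub2, map_smul, hκker, smul_zero]
    exact sub_eq_zero.mp h3
  -- the lists
  have hcards : ∀ i : Fin n, ∃ Si : Finset (ZMod p),
      (∀ k t, phi i (zfun k t) ∈ Si) ∧ Si.card = ℓ := by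
    intro i
    let ext0 : ({j : Fin n // j ≠ i} → Fin T) → (Fin n → Fin T) :=
      fun t j => if h : j = i then ⟨0, hT0⟩ else t ⟨j, h⟩
    let V : Finset (ZMod p) := Finset.image
      (fun q : Fin s × ({j : Fin n // j ≠ i} → Fin T) => phi i (zfun q.1 (ext0 q.2))) univ
    have hVmem : ∀ k t, phi i (zfun k t) ∈ V := by
      intro k t
      have heq2 : phi i (zfun k t) = phi i (zfun k (ext0 (fun j => t j.1))) := by
        apply hker2
        intro j hj
        simp [ext0, dif_neg hj]
      refine Finset.mem_image.mpr ⟨(k, fun j => t j.1), Finset.mem_univ _, ?_⟩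
      exact heq2.symm
    have hVcard : V.card ≤ ℓ := by
      have h1 : V.card ≤ Fintype.card (Fin s × ({j : Fin n // j ≠ i} → Fin T)) := by
        simpa using Finset.card_image_le (s := univ)
          (f := fun q : Fin s × ({j : Fin n // j ≠ i} → Fin T) => phi i (zfun q.1 (ext0 q.2)))
      have h2 : Fintype.card (Fin s × ({j : Fin n // j ≠ i} → Fin T)) = s * T^(n-1) := by
        have hcs : Fintype.card {j : Fin n // j ≠ i} = n - 1 := by
          have hcc : Fintype.card {j : Fin n // ¬ (j = i)} = n - 1 := by
            rw [Fintype.card_subtype_compl, Fintype.card_subtype_eq, Fintype.card_fin]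
          exact hcc
        rw [Fintype.card_prod, Fintype.card_fin, Fintype.card_pi, Finset.prod_const,
          Finset.card_univ, hcs, Fintype.card_fin]
      rw [h2] at h1
      exact le_trans h1 hsT
    obtain ⟨Si, hsub, -, hScard⟩ := Finset.exists_subsuperset_card_eq
      (Finset.subset_univ V) hVcard (by rw [Finset.card_univ, ZMod.card]; exact hℓp)
    exact ⟨Si, fun k t => hsub (hVmem k t), hScard⟩
  choose S hSmem hScard using hcards
  refine ⟨S, hScard, ?_⟩
  -- counting
  have herr : ∀ k t, (Nat.card {i : Fin n // ψ (zfun k t) i ∉ S i} : ℝ) ≤ α * (n:ℝ) := by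
    intro k t
    have hempty : IsEmpty {i : Fin n // ψ (zfun k t) i ∉ S i} :=
      ⟨fun ⟨i, hi⟩ => hi (hSmem i k t)⟩
    rw [Nat.card_of_isEmpty]
    exact le_trans (by norm_num) (mul_nonneg hα (Nat.cast_nonneg n))
  let Φ : Fin s × (Fin n → Fin T) → {x : Fin n → ZMod p //
      x ∈ (C : Set (Fin n → ZMod p)) ∧ (Nat.card {i : Fin n // x i ∉ S i} : ℝ) ≤ α * (n:ℝ)} :=
    fun q => ⟨ψ (zfun q.1 q.2), hψmem _, herr q.1 q.2⟩
  have hΦinj : Function.Injective Φ := by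
    intro q q' hqq
    have h1 : ψ (zfun q.1 q.2) = ψ (zfun q'.1 q'.2) := congrArg Subtype.val hqq
    exact hzinj (hψinj h1)
  calc s * T^n = Nat.card (Fin s × (Fin n → Fin T)) := by
        rw [Nat.card_eq_fintype_card, Fintype.card_prod, Fintype.card_fin,
          Fintype.card_pi_const, Fintype.card_fin]
  _ ≤ _ := Nat.card_le_card_of_injective Φ hΦinj

lemma get_indep {p n : ℕ} [hp : Fact p.Prime] (C : Submodule (ZMod p) (Fin n → ZMod p))
    (h2 : 2 ≤ Module.finrank (ZMod p) C) :
    ∃ u v : Fin n → ZMod p, u ∈ C ∧ v ∈ C ∧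
      ∀ a b : ZMod p, a • u + b • v = 0 → a = 0 ∧ b = 0 := by
  classical
  haveI : NeZero p := ⟨hp.out.ne_zero⟩
  have bC := Module.finBasis (ZMod p) C
  set r := Module.finrank (ZMod p) C with hr
  have h0 : (0:ℕ) < r := by omega
  have h1 : (1:ℕ) < r := by omega
  set i0 : Fin r := ⟨0, h0⟩ with hi0
  set i1 : Fin r := ⟨1, h1⟩ with hi1
  refine ⟨(bC i0 : Fin n → ZMod p), (bC i1 : Fin n → ZMod p), (bC i0).2, (bC i1).2, ?_⟩
  intro a b hab
  have hC : a • bC i0 + b • bC i1 = (0 : C) := by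
    apply Subtype.ext
    simp only [Submodule.coe_add, Submodule.coe_smul, ZeroMemClass.coe_zero]
    exact hab
  have hrepr := congrArg bC.repr hC
  rw [map_add, map_smul, map_smul, Module.Basis.repr_self, Module.Basis.repr_self, map_zero] at hrepr
  have hne : i0 ≠ i1 := by
    rw [hi0, hi1]
    intro h
    exact absurd (Fin.mk.injEq 0 h0 1 h1 ▸ congrArg Fin.val h) (by norm_num)
  constructor
  · have := congrArg (fun f => f i0) hrepr
    simpa [Finsupp.single_apply, hne, hne.symm] using this
  · have := congrArg (fun f => f i1) hrepr
    simpa [Finsupp.single_apply, hne, hne.symm] using this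

/-- Exponential lower bound: for all `α, ε ∈ (0,1)` there are `δ > 0`, `n₀`, and a
computable `f` such that for every `n ≥ n₀`, prime `p ≥ f(n)`, linear code
`C ⊆ 𝔽_p^n` of dimension at least two, and integer `ℓ` with `2^{δn} ≤ ℓ ≤ p`, the code
`C` is not `(α, ℓ, ((1+ε)/(1-α)) ℓ)`-list recoverable. -/
theorem stmt_18 (α ε : ℝ) (hα : α ∈ Set.Ioo (0 : ℝ) 1) (hε : ε ∈ Set.Ioo (0 : ℝ) 1) :
    ∃ (δ : ℝ) (n₀ : ℕ) (f : ℕ → ℕ), 0 < δ ∧ 0 < n₀ ∧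
      ∀ n : ℕ, n₀ ≤ n → ∀ p : ℕ, p.Prime → f n ≤ p →
        ∀ C : Submodule (ZMod p) (Fin n → ZMod p), 2 ≤ Module.finrank (ZMod p) C →
          ∀ ℓ : ℕ, (2 : ℝ) ^ (δ * (n : ℝ)) ≤ (ℓ : ℝ) → ℓ ≤ p →
            ¬ ListRecoverable (C : Set (Fin n → ZMod p)) α ℓ
                (((1 + ε) / (1 - α)) * (ℓ : ℝ)) := by
  obtain ⟨hα0, hα1⟩ := hα
  obtain ⟨hε0, hε1⟩ := hε
  set c : ℝ := (1 + ε) / (1 - α) with hc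
  have hc0 : 0 < c := div_pos (by linarith) (by linarith)
  clear_value c
  obtain ⟨T, hT2, hcT⟩ : ∃ T : ℕ, 2 ≤ T ∧ c + 3 ≤ (T : ℝ) := by
    refine ⟨⌈c⌉₊ + 3, by omega, ?_⟩
    push_cast
    have := Nat.le_ceil c
    linarith
  have hT1 : (1:ℝ) < (T:ℝ) := by linarith
  refine ⟨Real.logb 2 T, 1, fun n => (2*T)^(n+1)*(n+1) + 1, ?_, one_pos, ?_⟩
  · apply Real.logb_pos (by norm_num) hT1
  intro n hn p hprime hfn C hrank ℓ hℓlow hℓp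
  haveI hpfact : Fact p.Prime := ⟨hprime⟩
  replace hfn : (2*T)^(n+1)*(n+1) + 1 ≤ p := hfn
  have hpbig : (2*T)^(n+1)*(n+1) < p := by omega
  -- ℓ ≥ T^n
  have hTn : T^n ≤ ℓ := by
    have h1 : (2:ℝ) ^ (Real.logb 2 T * (n:ℝ)) = (T:ℝ)^(n:ℕ) := by
      rw [Real.rpow_mul (by norm_num : (0:ℝ) ≤ 2)]
      rw [Real.rpow_logb (by norm_num) (by norm_num) (by linarith : (0:ℝ) < (T:ℝ))]
      rw [Real.rpow_natCast]
    rw [h1] at hℓlow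
    have h2 : ((T^n : ℕ) : ℝ) ≤ (ℓ : ℝ) := by
      push_cast
      exact hℓlow
    exact_mod_cast h2
  have hT0' : 0 < T := by omega
  obtain ⟨u, v, hu, hv, hUV⟩ := get_indep C hrank
  obtain ⟨S, hScard, hcount⟩ := construction hn hT2 hpbig hTn hℓp α (le_of_lt hα0) C u v hu hv hUV
  intro hLR
  have hle := hLR S hScard
  -- numeric contradiction
  set s : ℕ := ℓ / T^(n-1) with hs
  clear_value s
  have hcast := (Nat.cast_le (α := ℝ)).mpr hcount
  have hkey : c * (ℓ:ℝ) < ((s * T^n : ℕ) : ℝ) := by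
    have hm : T^(n-1) * s + ℓ % T^(n-1) = ℓ := by
      rw [hs]
      exact Nat.div_add_mod ℓ (T^(n-1))
    have hmr : ℓ % T^(n-1) < T^(n-1) := Nat.mod_lt _ (Nat.pow_pos hT0')
    have hTn' : T^(n-1) * T = T^n := by
      rw [← pow_succ]
      congr 1
      exact Nat.succ_pred_eq_of_pos hn
    -- real versions
    have hmR : (T:ℝ)^(n-1) * (s:ℝ) + ((ℓ % T^(n-1) : ℕ) : ℝ) = (ℓ:ℝ) := by
      exact_mod_cast hm
    have hmrR : ((ℓ % T^(n-1) : ℕ) : ℝ) + 1 ≤ (T:ℝ)^(n-1) := by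
      exact_mod_cast Nat.succ_le_of_lt hmr
    have hTnR : (T:ℝ)^(n-1) * (T:ℝ) ≤ (ℓ:ℝ) := by
      rw [show (T:ℝ)^(n-1) * (T:ℝ) = ((T^(n-1) * T : ℕ) : ℝ) by push_cast; ring]
      rw [hTn']
      exact_mod_cast hTn
    have hsTnR : ((s * T^n : ℕ) : ℝ) = (s:ℝ) * ((T:ℝ)^(n-1) * (T:ℝ)) := by
      push_cast
      rw [show ((T:ℝ)^(n-1) * (T:ℝ)) = ((T^(n-1) * T : ℕ):ℝ) by push_cast; ring, hTn']
      push_cast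
      ring
    have hℓpos : (0:ℝ) < (ℓ:ℝ) := by
      have : (0:ℕ) < ℓ := lt_of_lt_of_le (Nat.pow_pos hT0') hTn
      exact_mod_cast this
    have hTpos : (0:ℝ) < (T:ℝ) := by linarith
    -- main chain
    rw [hsTnR]
    have e1 : (s:ℝ) * ((T:ℝ)^(n-1) * (T:ℝ)) = ((ℓ:ℝ) - ((ℓ % T^(n-1) : ℕ):ℝ)) * (T:ℝ) := by
      rw [← hmR]
      ring
    rw [e1]
    have e2 : ((ℓ:ℝ) - ((ℓ % T^(n-1) : ℕ):ℝ)) * (T:ℝ) ≥ ((ℓ:ℝ) - (T:ℝ)^(n-1) + 1) * (T:ℝ) := by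
      apply mul_le_mul_of_nonneg_right _ (le_of_lt hTpos)
      linarith
    have e3 : ((ℓ:ℝ) - (T:ℝ)^(n-1) + 1) * (T:ℝ) > c * (ℓ:ℝ) := by
      have h4 : (T:ℝ)^(n-1) * (T:ℝ) ≤ (ℓ:ℝ) := hTnR
      have h5 : (T:ℝ)^(n-1) ≤ (ℓ:ℝ) / (T:ℝ) := by
        rw [le_div_iff₀ hTpos]
        exact h4
      have h6 : ((ℓ:ℝ) - (T:ℝ)^(n-1) + 1) * (T:ℝ) ≥ ((ℓ:ℝ) - (ℓ:ℝ)/(T:ℝ) + 1) * (T:ℝ) := by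
        apply mul_le_mul_of_nonneg_right _ (le_of_lt hTpos)
        linarith
      have h7 : ((ℓ:ℝ) - (ℓ:ℝ)/(T:ℝ) + 1) * (T:ℝ) = (ℓ:ℝ)*(T:ℝ) - (ℓ:ℝ) + (T:ℝ) := by
        field_simp
      have h8 : (ℓ:ℝ)*(T:ℝ) - (ℓ:ℝ) + (T:ℝ) > c * (ℓ:ℝ) := by
        have h9 : (ℓ:ℝ) * ((T:ℝ) - 1 - c) ≥ (ℓ:ℝ) * 2 := by
          apply mul_le_mul_of_nonneg_left _ (le_of_lt hℓpos)
          linarith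
        nlinarith
      linarith
    linarith
  linarith [hkey, hle, hcast]
end
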